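/- arXiv:2012.03454 — 6 statements merged into one kernel-verified Lean document; each statement's English description precedes it below -/
import Mathlib

section
/- Suppose that for some B, q > 0 there exists an adversary scheme A that runs for at most T time steps (A may adaptively stop at a random time T_act ≤ T) such that for every forecaster, Pr[max_{t ∈ [T_act]} calerr(t) ≥ B] ≥ q. Then there also exists an adversary scheme that lasts exactly T time steps such that for every forecaster, Pr[calerr(T) ≥ B/2] ≥ q. -/
open scoped Classical
open scoped ENNReal

/-- A transcript of play: the list of (prediction, bit) pairs so far, earliest first. -/
abbrev Transcript : Type := List (ℝ × Bool)

/-- `Δ h p` is the bias `m_p - n_p * p` of prediction value `p` in transcript `h`. -/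
noncomputable def bias (h : Transcript) (p : ℝ) : ℝ :=
  ((h.filter fun x => decide (x.1 = p ∧ x.2 = true)).length : ℝ)
    - ((h.filter fun x => decide (x.1 = p)).length : ℝ) * p

/-- The calibration error of a transcript. -/
noncomputable def calErr (h : Transcript) : ℝ :=
  ∑ p ∈ (h.map Prod.fst).toFinset, |bias h p|

/-- Bernoulli distribution on `Bool` with parameter `p` (junk if `p > 1` or `p < 0`). -/
noncomputable def bern (p : ℝ) : PMF Bool :=
  if h : ENNReal.ofReal p ≤ 1 then PMF.bernoulli (Real.toNNReal p) (ENNReal.coe_le_one_iff.mp h) else PMF.pure true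

/-- Distribution over transcripts after `T` steps, where the forecaster samples a prediction
from `F h` and the adversary simultaneously samples a bit from `A h`. -/
noncomputable def playDist (F : Transcript → PMF ℝ) (A : Transcript → PMF Bool) :
    ℕ → PMF Transcript
  | 0 => PMF.pure []
  | T + 1 => (playDist F A T).bind fun h =>
      (F h).bind fun p => (A h).map fun b => h ++ [(p, b)]

/-- Expected calibration error after `T` steps. -/
noncomputable def expCalErr (F : Transcript → PMF ℝ) (A : Transcript → PMF Bool) (T : ℕ) : ℝ :=
  ∑' h : Transcript, (playDist F A T h).toReal * calErr h

/-- Probability of an event under a PMF on transcripts. -/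
noncomputable def prEvent (μ : PMF Transcript) (E : Transcript → Prop) : ℝ :=
  (∑' h : Transcript, if E h then μ h else 0).toReal

/-- maximum cumulative calibration error over all prefixes of a transcript. -/
noncomputable def maxCalErr (h : Transcript) : ℝ :=
  (Finset.range (h.length + 1)).sup' (by simp) fun t => calErr (h.take t)

/-- Play with an adversary that may stop early (`none`); second component records stopping. -/
noncomputable def playStop (F : Transcript → PMF ℝ) (A : Transcript → PMF (Option Bool)) :
    ℕ → PMF (Transcript × Bool)
  | 0 => PMF.pure ([], false)
  | T + 1 => (playStop F A T).bind fun s =>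
      if s.2 then PMF.pure s
      else (A s.1).bind fun ob =>
        match ob with
        | none => PMF.pure (s.1, true)
        | some b => (F s.1).map fun p => (s.1 ++ [(p, b)], false)

/-! ### deterministic lemmas -/

noncomputable def posSum (h : Transcript) : ℝ :=
  ∑ p ∈ (h.map Prod.fst).toFinset, max (bias h p) 0

noncomputable def negSum (h : Transcript) : ℝ :=
  ∑ p ∈ (h.map Prod.fst).toFinset, max (-(bias h p)) 0

lemma calErr_eq (h : Transcript) : calErr h = posSum h + negSum h := by
  unfold calErr posSum negSum
  rw [← Finset.sum_add_distrib]
  refine Finset.sum_congr rfl fun p _ => ?_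
  rcases le_total (bias h p) 0 with hb | hb
  · rw [abs_of_nonpos hb, max_eq_right hb, max_eq_left (by linarith), zero_add]
  · rw [abs_of_nonneg hb, max_eq_left hb, max_eq_right (by linarith), add_zero]

lemma posSum_nonneg (h : Transcript) : 0 ≤ posSum h :=
  Finset.sum_nonneg fun p _ => le_max_right _ _

lemma negSum_nonneg (h : Transcript) : 0 ≤ negSum h :=
  Finset.sum_nonneg fun p _ => le_max_right _ _

def Maintain (B : ℝ) (h : Transcript) : Prop := B / 2 ≤ posSum h ∨ B / 2 ≤ negSum h

lemma calErr_ge_of_Maintain {B : ℝ} {h : Transcript} (hI : Maintain B h) : B / 2 ≤ calErr h := by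
  rw [calErr_eq]
  rcases hI with hI | hI
  · have := negSum_nonneg h; linarith
  · have := posSum_nonneg h; linarith

lemma Maintain_of_calErr {B : ℝ} {h : Transcript} (hc : B ≤ calErr h) : Maintain B h := by
  rw [calErr_eq] at hc
  by_contra hcon
  rw [Maintain, not_or] at hcon
  push_neg at hcon
  linarith [hcon.1, hcon.2]

lemma bias_append (h : Transcript) (p : ℝ) (b : Bool) (q : ℝ) :
    bias (h ++ [(p, b)]) q
      = bias h q + (if q = p then (if b then (1:ℝ) else 0) - q else 0) := by
  unfold bias
  rw [List.filter_append, List.filter_append, List.length_append, List.length_append]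
  push_cast
  rcases eq_or_ne q p with hqp | hqp
  · subst hqp
    cases b <;> simp <;> ring
  · simp [Ne.symm hqp, hqp]

lemma bias_of_not_mem {h : Transcript} {q : ℝ} (hq : q ∉ (h.map Prod.fst).toFinset) :
    bias h q = 0 := by
  have h1 : (h.filter fun x => decide (x.1 = q ∧ x.2 = true)) = [] := by
    rw [List.filter_eq_nil_iff]
    intro x hx hdec
    exact hq (List.mem_toFinset.2 (List.mem_map.2 ⟨x, hx, (of_decide_eq_true hdec).1⟩))
  have h2 : (h.filter fun x => decide (x.1 = q)) = [] := by
    rw [List.filter_eq_nil_iff]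
    intro x hx hdec
    exact hq (List.mem_toFinset.2 (List.mem_map.2 ⟨x, hx, of_decide_eq_true hdec⟩))
  rw [bias, h1, h2]
  simp

lemma predset_append (h : Transcript) (p : ℝ) (b : Bool) :
    ((h ++ [(p, b)]).map Prod.fst).toFinset = insert p (h.map Prod.fst).toFinset := by
  rw [List.map_append, List.toFinset_append]
  ext x; simp [or_comm]

lemma posSum_le_append {h : Transcript} {p : ℝ} (hp0 : 0 ≤ p) (hp1 : p ≤ 1) :
    posSum h ≤ posSum (h ++ [(p, true)]) := by
  unfold posSum
  rw [predset_append]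
  by_cases hmem : p ∈ (h.map Prod.fst).toFinset
  · rw [Finset.insert_eq_self.2 hmem]
    refine Finset.sum_le_sum fun q hq => ?_
    rw [bias_append]
    by_cases hqp : q = p
    · rw [if_pos hqp]
      refine max_le_max ?_ le_rfl
      have : (0:ℝ) ≤ (if (true : Bool) then (1:ℝ) else 0) - q := by
        subst hqp; simp; linarith
      linarith
    · rw [if_neg hqp, add_zero]
  · rw [Finset.sum_insert hmem]
    have heq : ∑ q ∈ (h.map Prod.fst).toFinset, max (bias (h ++ [(p, true)]) q) 0
        = ∑ q ∈ (h.map Prod.fst).toFinset, max (bias h q) 0 := by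
      refine Finset.sum_congr rfl fun q hq => ?_
      have hqp : ¬ (q = p) := fun hqp => hmem (hqp ▸ hq)
      rw [bias_append, if_neg hqp, add_zero]
    rw [heq]
    have : 0 ≤ max (bias (h ++ [(p, true)]) p) 0 := le_max_right _ _
    linarith

lemma negSum_le_append {h : Transcript} {p : ℝ} (hp0 : 0 ≤ p) (hp1 : p ≤ 1) :
    negSum h ≤ negSum (h ++ [(p, false)]) := by
  unfold negSum
  rw [predset_append]
  by_cases hmem : p ∈ (h.map Prod.fst).toFinset
  · rw [Finset.insert_eq_self.2 hmem]
    refine Finset.sum_le_sum fun q hq => ?_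
    rw [bias_append]
    by_cases hqp : q = p
    · rw [if_pos hqp]
      refine max_le_max ?_ le_rfl
      have : (if (false : Bool) then (1:ℝ) else 0) - q ≤ 0 := by
        subst hqp; simp; linarith
      linarith
    · rw [if_neg hqp, add_zero]
  · rw [Finset.sum_insert hmem]
    have heq : ∑ q ∈ (h.map Prod.fst).toFinset, max (-(bias (h ++ [(p, false)]) q)) 0
        = ∑ q ∈ (h.map Prod.fst).toFinset, max (-(bias h q)) 0 := by
      refine Finset.sum_congr rfl fun q hq => ?_
      have hqp : ¬ (q = p) := fun hqp => hmem (hqp ▸ hq)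
      rw [bias_append, if_neg hqp, add_zero]
    rw [heq]
    have : 0 ≤ max (-(bias (h ++ [(p, false)]) p)) 0 := le_max_right _ _
    linarith

noncomputable def goodBit (B : ℝ) (h : Transcript) : Bool := decide (B / 2 ≤ posSum h)

lemma Maintain_step {B : ℝ} {h : Transcript} (hI : Maintain B h) {p : ℝ} (hp0 : 0 ≤ p) (hp1 : p ≤ 1) :
    Maintain B (h ++ [(p, goodBit B h)]) := by
  by_cases hpos : B / 2 ≤ posSum h
  · left
    have : goodBit B h = true := decide_eq_true hpos
    rw [this]
    exact le_trans hpos (posSum_le_append hp0 hp1)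
  · right
    have hneg : B / 2 ≤ negSum h := hI.resolve_left hpos
    have : goodBit B h = false := decide_eq_false hpos
    rw [this]
    exact le_trans hneg (negSum_le_append hp0 hp1)

lemma calErr_le_maxCalErr (h : Transcript) : calErr h ≤ maxCalErr h := by
  have := Finset.le_sup' (fun t => calErr (h.take t))
    (Finset.mem_range.2 (Nat.lt_succ_self h.length))
  simpa only [maxCalErr, List.take_length] using this

lemma maxCalErr_append (h : Transcript) (x : ℝ × Bool) :
    maxCalErr (h ++ [x]) = max (maxCalErr h) (calErr (h ++ [x])) := by
  have hlen : (h ++ [x]).length = h.length + 1 := by simp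
  have htake : ∀ t, t ≤ h.length → (h ++ [x]).take t = h.take t := by
    intro t ht
    rw [List.take_append, Nat.sub_eq_zero_of_le ht, List.take_zero,
      List.append_nil]
  have hfull : (h ++ [x]).take (h.length + 1) = h ++ [x] := by
    rw [← hlen, List.take_length]
  unfold maxCalErr
  apply le_antisymm
  · apply Finset.sup'_le
    intro t ht
    have ht' : t ≤ h.length + 1 := by
      have := Finset.mem_range.1 ht
      omega
    rcases Nat.lt_or_ge t (h.length + 1) with h1 | h1
    · have h2 : t ≤ h.length := Nat.lt_succ_iff.1 h1
      rw [htake t h2]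
      refine le_trans (Finset.le_sup' (fun t => calErr (h.take t))
        (Finset.mem_range.2 h1)) (le_max_left _ _)
    · have h2 : t = h.length + 1 := le_antisymm ht' h1
      rw [h2, hfull]
      exact le_max_right _ _
  · apply max_le
    · apply Finset.sup'_le
      intro t ht
      have h2 : t ≤ h.length := Nat.lt_succ_iff.1 (Finset.mem_range.1 ht)
      have := Finset.le_sup' (fun t => calErr ((h ++ [x]).take t))
        (Finset.mem_range.2 (show t < (h ++ [x]).length + 1 by omega))
      rw [htake t h2] at this
      exact this
    · have := Finset.le_sup' (fun t => calErr ((h ++ [x]).take t))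
        (Finset.mem_range.2 (show h.length + 1 < (h ++ [x]).length + 1 by omega))
      rw [hfull] at this
      exact this

lemma maxCalErr_nil : maxCalErr ([] : Transcript) = 0 := by
  simp [maxCalErr, calErr]

noncomputable def pr' {α : Type*} (μ : PMF α) (E : α → Prop) : ℝ≥0∞ :=
  ∑' a, if E a then μ a else 0

lemma pr'_le_one {α : Type*} (μ : PMF α) (E : α → Prop) : pr' μ E ≤ 1 := by
  rw [← PMF.tsum_coe μ]
  exact ENNReal.tsum_le_tsum fun a => by split <;> simp

lemma pr'_ne_top {α : Type*} (μ : PMF α) (E : α → Prop) : pr' μ E ≠ ⊤ :=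
  fun h => by simpa [h] using pr'_le_one μ E

lemma pr'_pure {α : Type*} (a : α) (E : α → Prop) :
    pr' (PMF.pure a) E = if E a then 1 else 0 := by
  rw [pr']
  rw [tsum_eq_single a]
  · simp
  · intro b hb
    simp [PMF.pure_apply, hb]

lemma pr'_bind {α β : Type*} (μ : PMF α) (f : α → PMF β) (E : β → Prop) :
    pr' (μ.bind f) E = ∑' a, μ a * pr' (f a) E := by
  rw [pr']
  have : ∀ b, (if E b then (μ.bind f) b else 0) = ∑' a, μ a * (if E b then f a b else 0) := by
    intro b
    split
    · rw [PMF.bind_apply]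
    · simp
  rw [tsum_congr this, ENNReal.tsum_comm]
  refine tsum_congr fun a => ?_
  rw [ENNReal.tsum_mul_left, pr']

lemma pr'_map {α β : Type*} (μ : PMF α) (g : α → β) (E : β → Prop) :
    pr' (μ.map g) E = pr' μ fun a => E (g a) := by
  rw [PMF.map, pr'_bind, pr']
  refine tsum_congr fun a => ?_
  have : (PMF.pure ∘ g) a = PMF.pure (g a) := rfl
  rw [this, pr'_pure]
  split <;> simp

lemma pr'_eq_one {α : Type*} {μ : PMF α} {E : α → Prop}
    (h : ∀ a, μ a ≠ 0 → E a) : pr' μ E = 1 := by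
  rw [pr', ← PMF.tsum_coe μ]
  refine tsum_congr fun a => ?_
  by_cases ha : μ a = 0
  · simp [ha]
  · rw [if_pos (h a ha)]

/-! ### Process machinery -/

section Proc

variable (F : Transcript → PMF ℝ)

noncomputable def stepStop (A : Transcript → PMF (Option Bool)) (s : Transcript × Bool) :
    PMF (Transcript × Bool) :=
  if s.2 then PMF.pure s
  else (A s.1).bind fun ob =>
    match ob with
    | none => PMF.pure (s.1, true)
    | some b => (F s.1).map fun p => (s.1 ++ [(p, b)], false)

noncomputable def stopCont (A : Transcript → PMF (Option Bool)) :
    ℕ → (Transcript × Bool) → PMF (Transcript × Bool)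
  | 0, s => PMF.pure s
  | n + 1, s => (stepStop F A s).bind (stopCont A n)

noncomputable def stepPlay (A' : Transcript → PMF Bool) (h : Transcript) : PMF Transcript :=
  (F h).bind fun p => (A' h).map fun b => h ++ [(p, b)]

noncomputable def playCont (A' : Transcript → PMF Bool) : ℕ → Transcript → PMF Transcript
  | 0, h => PMF.pure h
  | n + 1, h => (stepPlay F A' h).bind (playCont A' n)

variable (A : Transcript → PMF (Option Bool)) (A' : Transcript → PMF Bool)

lemma stopCont_succ_right (n : ℕ) (s : Transcript × Bool) :
    stopCont F A (n + 1) s = (stopCont F A n s).bind (stepStop F A) := by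
  induction n generalizing s with
  | zero => simp only [stopCont, PMF.pure_bind, PMF.bind_pure]
  | succ n ih =>
      simp only [stopCont]
      rw [PMF.bind_bind]
      exact congrArg _ (funext fun s' => ih s')

lemma playStop_eq_stopCont (n : ℕ) : playStop F A n = stopCont F A n ([], false) := by
  induction n with
  | zero => rfl
  | succ n ih =>
      rw [stopCont_succ_right, ← ih]
      rfl

lemma playCont_succ_right (n : ℕ) (h : Transcript) :
    playCont F A' (n + 1) h = (playCont F A' n h).bind (stepPlay F A') := by
  induction n generalizing h with
  | zero => simp only [playCont, PMF.pure_bind, PMF.bind_pure]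
  | succ n ih =>
      simp only [playCont]
      rw [PMF.bind_bind]
      exact congrArg _ (funext fun h' => ih h')

lemma playDist_eq_playCont (n : ℕ) : playDist F A' n = playCont F A' n [] := by
  induction n with
  | zero => rfl
  | succ n ih =>
      rw [playCont_succ_right, ← ih]
      rfl

lemma stopCont_stopped (n : ℕ) (h : Transcript) :
    stopCont F A n (h, true) = PMF.pure (h, true) := by
  induction n with
  | zero => rfl
  | succ n ih =>
      simp only [stopCont]
      have hs : stepStop F A (h, true) = PMF.pure (h, true) := if_pos rfl
      rw [hs, PMF.pure_bind, ih]

end Proc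

/-! ### Main lemmas -/

lemma pr'_bind_eq_one {α β : Type*} {μ : PMF α} {f : α → PMF β} {E : β → Prop}
    (h : ∀ a, μ a ≠ 0 → pr' (f a) E = 1) : pr' (μ.bind f) E = 1 := by
  rw [pr'_bind, ← PMF.tsum_coe μ]
  refine tsum_congr fun a => ?_
  by_cases ha : μ a = 0
  · simp [ha]
  · rw [h a ha, mul_one]

section Main

variable {B : ℝ} {P : Finset ℝ} (hP : (P : Set ℝ) ⊆ Set.Icc 0 1)
  {F : Transcript → PMF ℝ} (hF : ∀ h, (F h).support ⊆ (P : Set ℝ))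
  {A : Transcript → PMF (Option Bool)} {A' : Transcript → PMF Bool}
  (hA'1 : ∀ h, Maintain B h → A' h = PMF.pure (goodBit B h))
  (hA'2 : ∀ h, ¬ Maintain B h → A' h = (A h).map (fun ob => ob.getD false))

include hP hF hA'1 in
lemma maintain_one : ∀ n (h : Transcript), Maintain B h →
    pr' (playCont F A' n h) (fun h' => B / 2 ≤ calErr h') = 1 := by
  intro n
  induction n with
  | zero =>
      intro h hI
      simp only [playCont, pr'_pure]
      rw [if_pos (calErr_ge_of_Maintain hI)]
  | succ n ih =>
      intro h hI
      simp only [playCont]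
      refine pr'_bind_eq_one fun h' hh' => ?_
      have hsupp : h' ∈ (stepPlay F A' h).support := (PMF.mem_support_iff _ _).2 hh'
      rw [stepPlay, PMF.support_bind] at hsupp
      obtain ⟨p, hp, hmem⟩ := Set.mem_iUnion₂.1 hsupp
      rw [hA'1 h hI, PMF.map, PMF.pure_bind] at hmem
      simp only [Function.comp_apply, PMF.support_pure, Set.mem_singleton_iff] at hmem
      subst hmem
      have hpP : p ∈ (P : Set ℝ) := hF h hp
      have hpI := hP hpP
      exact ih _ (Maintain_step hI hpI.1 hpI.2)

include hP hF hA'1 hA'2 in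
lemma key (hB : 0 < B) : ∀ n (h : Transcript) (st : Bool),
    (B ≤ maxCalErr h → Maintain B h) →
    pr' (stopCont F A n (h, st)) (fun s => B ≤ maxCalErr s.1)
      ≤ pr' (playCont F A' n h) (fun h' => B / 2 ≤ calErr h') := by
  intro n
  induction n with
  | zero =>
      intro h st hcond
      simp only [stopCont, playCont, pr'_pure]
      by_cases hx : B ≤ maxCalErr h
      · rw [if_pos hx, if_pos (calErr_ge_of_Maintain (hcond hx))]
      · rw [if_neg hx]
        exact zero_le
  | succ n ih =>
      intro h st hcond
      cases st with
      | true =>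
          rw [stopCont_succ_right, stopCont_stopped, PMF.pure_bind]
          have hstep : stepStop F A (h, true) = PMF.pure (h, true) := if_pos rfl
          rw [hstep, pr'_pure]
          by_cases hx : B ≤ maxCalErr h
          · rw [if_pos hx, maintain_one hP hF hA'1 _ _ (hcond hx)]
          · rw [if_neg hx]
            exact zero_le
      | false =>
          by_cases hM : Maintain B h
          · rw [maintain_one hP hF hA'1 _ _ hM]
            exact pr'_le_one _ _
          · have hmax : ¬ (B ≤ maxCalErr h) := fun hx => hM (hcond hx)
            -- unfold LHS
            have hstep : stepStop F A (h, false) = (A h).bind fun ob =>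
                match ob with
                | none => PMF.pure (h, true)
                | some b => (F h).map fun p => (h ++ [(p, b)], false) := if_neg (by simp)
            have hL : stopCont F A (n + 1) (h, false)
                = (A h).bind fun ob => (match ob with
                    | none => PMF.pure (h, true)
                    | some b => (F h).map fun p =>
                        (h ++ [(p, b)], false) : PMF (Transcript × Bool)).bind
                      (stopCont F A n) := by
              simp only [stopCont]
              rw [hstep, PMF.bind_bind]
            -- unfold RHS
            have hR : playCont F A' (n + 1) h
                = (A h).bind fun ob => (F h).bind fun p =>
                    playCont F A' n (h ++ [(p, ob.getD false)]) := by
              simp only [playCont, stepPlay]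
              rw [hA'2 h hM, PMF.bind_bind]
              have : ∀ p : ℝ,
                  (((A h).map fun ob => ob.getD false).map fun b => h ++ [(p, b)]).bind
                      (playCont F A' n)
                    = (A h).bind fun ob => playCont F A' n (h ++ [(p, ob.getD false)]) := by
                intro p
                rw [PMF.map_comp, PMF.bind_map]
                rfl
              rw [funext this]
              rw [PMF.bind_comm]
            rw [hL, hR, pr'_bind, pr'_bind]
            refine ENNReal.tsum_le_tsum fun ob => mul_le_mul_right ?_ _
            cases ob with
            | none =>
                rw [PMF.pure_bind, stopCont_stopped, pr'_pure, if_neg hmax]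
                exact zero_le
            | some b =>
                rw [PMF.bind_map, pr'_bind, pr'_bind]
                refine ENNReal.tsum_le_tsum fun p => ?_
                by_cases hp : F h p = 0
                · simp [hp]
                · refine mul_le_mul_right ?_ _
                  have hcond' : B ≤ maxCalErr (h ++ [(p, b)]) → Maintain B (h ++ [(p, b)]) := by
                    intro hx
                    rw [maxCalErr_append] at hx
                    rcases le_max_iff.mp hx with hx1 | hx2
                    · exact absurd hx1 hmax
                    · exact Maintain_of_calErr hx2
                  exact ih (h ++ [(p, b)]) false hcond'

end Main

/-- **early stopping.** Suppose that for some `B, q > 0` there exists an adversary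
scheme `A` that runs for at most `T` time steps (adaptively stopping at a random time
`T_act ≤ T`) such that for every forecaster, `Pr[max_{t ∈ [T_act]} calerr(t) ≥ B] ≥ q`. Then
there also exists an adversary scheme lasting exactly `T` steps such that for every forecaster,
`Pr[calerr(T) ≥ B/2] ≥ q`. -/
theorem early_stopping (T : ℕ) (B q : ℝ) (hB : 0 < B) (hq : 0 < q)
    (P : Finset ℝ) (hP : (P : Set ℝ) ⊆ Set.Icc 0 1)
    (A : Transcript → PMF (Option Bool))
    (hA : ∀ F : Transcript → PMF ℝ, (∀ h, (F h).support ⊆ (P : Set ℝ)) →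
      q ≤ prEvent ((playStop F A T).map Prod.fst) fun h => B ≤ maxCalErr h) :
    ∃ A' : Transcript → PMF Bool,
      ∀ F : Transcript → PMF ℝ, (∀ h, (F h).support ⊆ (P : Set ℝ)) →
        q ≤ prEvent (playDist F A' T) fun h => B / 2 ≤ calErr h := by
  refine ⟨fun h => if Maintain B h then PMF.pure (goodBit B h)
    else (A h).map (fun ob => ob.getD false), ?_⟩
  set A' : Transcript → PMF Bool := fun h => if Maintain B h then PMF.pure (goodBit B h)
    else (A h).map (fun ob => ob.getD false) with hA'def
  intro F hF
  have hA'1 : ∀ h, Maintain B h → A' h = PMF.pure (goodBit B h) := by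
    intro h hM; rw [hA'def]; exact if_pos hM
  have hA'2 : ∀ h, ¬ Maintain B h → A' h = (A h).map (fun ob => ob.getD false) := by
    intro h hM; rw [hA'def]; exact if_neg hM
  have h1 := hA F hF
  have hinit : B ≤ maxCalErr [] → Maintain B ([] : Transcript) := by
    intro hx
    rw [maxCalErr_nil] at hx
    linarith
  have hle := key hP hF hA'1 hA'2 hB T [] false hinit
  have e1 : prEvent ((playStop F A T).map Prod.fst) (fun h => B ≤ maxCalErr h)
      = (pr' (stopCont F A T ([], false)) fun s => B ≤ maxCalErr s.1).toReal := by
    rw [prEvent]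
    congr 1
    rw [show (∑' h : Transcript, if B ≤ maxCalErr h then ((playStop F A T).map Prod.fst) h else 0)
        = pr' ((playStop F A T).map Prod.fst) (fun h => B ≤ maxCalErr h) from rfl]
    rw [pr'_map, playStop_eq_stopCont]
  have e2 : prEvent (playDist F A' T) (fun h => B / 2 ≤ calErr h)
      = (pr' (playCont F A' T []) fun h => B / 2 ≤ calErr h).toReal := by
    rw [prEvent]
    congr 1
    rw [show (∑' h : Transcript, if B / 2 ≤ calErr h then (playDist F A' T) h else 0)
        = pr' (playDist F A' T) (fun h => B / 2 ≤ calErr h) from rfl]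
    rw [playDist_eq_playCont]
  rw [e1] at h1
  rw [e2]
  exact le_trans h1 (ENNReal.toReal_mono (pr'_ne_top _ _) hle)
end

section
/- For every integer t ≥ 1, the value of the SignPreservation game with 2^t − 1 cells and t rounds equals t, i.e. opt(2^t − 1, t) = t. -/
open scoped Classical

/-- A play of the SignPreservation game: list of (cell, sign) placements, earliest first
(`true` = "+", `false` = "−"). -/
abbrev SPPlay : Type := List (ℕ × Bool)

/-- The sign `s` placed in cell `j` is removed by the later placements `rest` if some later
sign lies in a smaller-numbered cell (for "+") resp. a larger-numbered cell (for "−"). -/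
def SPremoved (j : ℕ) (s : Bool) (rest : SPPlay) : Prop :=
  if s then ∃ x ∈ rest, x.1 < j else ∃ x ∈ rest, j < x.1

/-- Number of preserved signs in a play. -/
noncomputable def preservedCount : SPPlay → ℕ
  | [] => 0
  | (j, s) :: rest => (if SPremoved j s rest then 0 else 1) + preservedCount rest

/-- Value of the SignPreservation game with cells `1,…,k`, `r` rounds remaining and
placements `L` made so far: player A (maximizer) may terminate or pick any empty cell,
after which player F (minimizer) picks the sign. -/
noncomputable def spValue (k : ℕ) : ℕ → SPPlay → ℕ
  | 0, L => preservedCount L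
  | r + 1, L =>
      max (preservedCount L)
        (((Finset.Icc 1 k).filter fun j => j ∉ L.map Prod.fst).sup fun j =>
          min (spValue k r (L ++ [(j, true)])) (spValue k r (L ++ [(j, false)])))

/-- `opt k r`: the value of the SignPreservation game `SP(k, r)` under optimal play. -/
noncomputable def opt (k r : ℕ) : ℕ := spValue k r []

lemma SPremoved_append_single (j : ℕ) (s : Bool) (L : SPPlay) (x : ℕ × Bool) :
    SPremoved j s (L ++ [x]) ↔ SPremoved j s L ∨ (if s then x.1 < j else j < x.1) := by
  cases s <;> simp [SPremoved, List.mem_append, or_and_right, exists_or]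

lemma preserved_append_le (L : SPPlay) (x : ℕ × Bool) :
    preservedCount (L ++ [x]) ≤ preservedCount L + 1 := by
  induction L with
  | nil =>
    obtain ⟨j, s⟩ := x
    cases s <;> simp [preservedCount, SPremoved]
  | cons p L ih =>
    obtain ⟨j, s⟩ := p
    simp only [List.cons_append, preservedCount, List.append_eq]
    by_cases hr : SPremoved j s (L ++ [x])
    · simp only [if_pos hr]; omega
    · have h : ¬ SPremoved j s L := fun hc => hr ((SPremoved_append_single j s L x).2 (Or.inl hc))
      simp only [if_neg hr, if_neg h]; omega

lemma preserved_append_safe (L : SPPlay) (x : ℕ × Bool)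
    (hs : ∀ p ∈ L, (p.2 = true → ¬ x.1 < p.1) ∧ (p.2 = false → ¬ p.1 < x.1)) :
    preservedCount (L ++ [x]) = preservedCount L + 1 := by
  induction L with
  | nil =>
    obtain ⟨j, s⟩ := x
    cases s <;> simp [preservedCount, SPremoved]
  | cons p L ih =>
    obtain ⟨j, s⟩ := p
    have hps := hs (j, s) List.mem_cons_self
    have hrest : ∀ p ∈ L, (p.2 = true → ¬ x.1 < p.1) ∧ (p.2 = false → ¬ p.1 < x.1) :=
      fun p hp => hs p (List.mem_cons_of_mem _ hp)
    have heq : SPremoved j s (L ++ [x]) ↔ SPremoved j s L := by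
      rw [SPremoved_append_single]
      constructor
      · rintro (h | h)
        · exact h
        · cases s
          · simp only [if_neg Bool.false_ne_true] at h
            exact absurd h (hps.2 rfl)
          · simp only [if_pos rfl] at h
            exact absurd h (hps.1 rfl)
      · exact Or.inl
    simp only [List.cons_append, preservedCount, List.append_eq, heq, ih hrest]
    omega

lemma sp_upper (k : ℕ) : ∀ r L, spValue k r L ≤ preservedCount L + r := by
  intro r
  induction r with
  | zero => intro L; simp [spValue]
  | succ r ih =>
    intro L
    rw [spValue]
    apply max_le
    · omega
    · apply Finset.sup_le
      intro j _
      calc min (spValue k r (L ++ [(j, true)])) (spValue k r (L ++ [(j, false)]))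
          ≤ spValue k r (L ++ [(j, true)]) := min_le_left _ _
        _ ≤ preservedCount (L ++ [(j, true)]) + r := ih _
        _ ≤ preservedCount L + (r + 1) := by
            have := preserved_append_le L (j, true); omega

def SPSafe (L : SPPlay) (a b : ℕ) : Prop :=
  ∀ p ∈ L, (p.2 = true → p.1 < a) ∧ (p.2 = false → b < p.1)

lemma sp_lower (k : ℕ) : ∀ r a (L : SPPlay), 1 ≤ a → a + 2 ^ r - 2 ≤ k →
    SPSafe L a (a + 2 ^ r - 2) → preservedCount L + r ≤ spValue k r L := by
  intro r
  induction r with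
  | zero => intro a L _ _ _; simp [spValue]
  | succ r ih =>
    intro a L ha hk hsafe
    have hP : 1 ≤ 2 ^ r := Nat.one_le_two_pow
    have hb : a + 2 ^ (r + 1) - 2 = a + 2 * 2 ^ r - 2 := by rw [pow_succ]; ring_nf
    rw [hb] at hk hsafe
    set m := a + 2 ^ r - 1 with hm
    have hm1 : 1 ≤ m := by omega
    have hmk : m ≤ k := by omega
    have hmem : m ∈ (Finset.Icc 1 k).filter fun j => j ∉ L.map Prod.fst := by
      simp only [Finset.mem_filter, Finset.mem_Icc, List.mem_map]
      refine ⟨⟨hm1, hmk⟩, ?_⟩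
      rintro ⟨p, hp, hpm⟩
      have := hsafe p hp
      cases hps : p.2
      · have := this.2 hps; omega
      · have := this.1 hps; omega
    rw [spValue]
    refine le_trans ?_ (le_max_right _ _)
    refine le_trans ?_ (Finset.le_sup hmem)
    have hsafeT : ∀ p ∈ L, (p.2 = true → ¬ m < p.1) ∧ (p.2 = false → ¬ p.1 < m) := by
      intro p hp
      have := hsafe p hp
      constructor
      · intro h; have := this.1 h; omega
      · intro h; have := this.2 h; omega
    have hT : preservedCount L + (r + 1) ≤ spValue k r (L ++ [(m, true)]) := by
      have hpc : preservedCount (L ++ [(m, true)]) = preservedCount L + 1 :=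
        preserved_append_safe L (m, true) hsafeT
      have hsafe' : SPSafe (L ++ [(m, true)]) (m + 1) (m + 1 + 2 ^ r - 2) := by
        intro p hp
        rcases List.mem_append.1 hp with hp | hp
        · have := hsafe p hp
          constructor
          · intro h; have := this.1 h; omega
          · intro h; have := this.2 h; omega
        · simp only [List.mem_singleton] at hp
          subst hp
          exact ⟨fun _ => by show m < m + 1; omega, fun h => by simp at h⟩
      have := ih (m + 1) (L ++ [(m, true)]) (by omega) (by omega) hsafe'
      omega
    have hF : preservedCount L + (r + 1) ≤ spValue k r (L ++ [(m, false)]) := by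
      have hpc : preservedCount (L ++ [(m, false)]) = preservedCount L + 1 :=
        preserved_append_safe L (m, false) hsafeT
      have hsafe' : SPSafe (L ++ [(m, false)]) a (a + 2 ^ r - 2) := by
        intro p hp
        rcases List.mem_append.1 hp with hp | hp
        · have := hsafe p hp
          constructor
          · intro h; exact this.1 h
          · intro h; have := this.2 h; omega
        · simp only [List.mem_singleton] at hp
          subst hp
          exact ⟨fun h => by simp at h, fun _ => by show a + 2 ^ r - 2 < m; omega⟩
      have := ih a (L ++ [(m, false)]) ha (by omega) hsafe'
      omega
    exact le_min hT hF


/-- For every integer `t ≥ 1`, the value of the SignPreservation game with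
`2^t − 1` cells and `t` rounds equals `t`: `opt(2^t − 1, t) = t`. -/
theorem sign_preservation_binary_search (t : ℕ) (ht : 1 ≤ t) :
    opt (2 ^ t - 1) t = t := by
  have h2 : 2 ≤ 2 ^ t := by
    calc 2 = 2 ^ 1 := rfl
    _ ≤ 2 ^ t := Nat.pow_le_pow_right (by norm_num) ht
  have hle : opt (2 ^ t - 1) t ≤ t := by
    have := sp_upper (2 ^ t - 1) t []
    simpa [opt, preservedCount] using this
  have hge : t ≤ opt (2 ^ t - 1) t := by
    have := sp_lower (2 ^ t - 1) t 1 [] le_rfl (by omega) (by intro p hp; simp at hp)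
    simpa [opt, preservedCount] using this
  omega
end

section
/- For every integer t ≥ 0, the value of the SignPreservation game with 255^t cells and 8^t rounds satisfies opt(255^t, 8^t) ≥ (9/2)^t. -/
open scoped Classical

/-- Number of signs of `L` preserved within `L` and safe against any future plays in cells
within `[y, x]`-complement sides: pluses must sit at cells `≤ x`, minuses at cells `≥ y`. -/
noncomputable def Q : SPPlay → ℕ → ℕ → ℕ
  | [], _, _ => 0
  | (j, s) :: rest, x, y =>
      (if ¬ SPremoved j s rest ∧ (if s then j ≤ x else y ≤ j) then 1 else 0) + Q rest x y

lemma Q_le (L : SPPlay) (x y : ℕ) : Q L x y ≤ preservedCount L := by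
  induction L with
  | nil => simp [Q, preservedCount]
  | cons e L ih =>
    obtain ⟨j, s⟩ := e
    simp only [Q, preservedCount]
    have h : (if ¬ SPremoved j s L ∧ (if s then j ≤ x else y ≤ j) then 1 else 0)
        ≤ (if SPremoved j s L then 0 else 1) := by
      by_cases hr : SPremoved j s L
      · simp [hr]
      · simp [hr]; split_ifs <;> omega
    omega

lemma Q_mono (L : SPPlay) {x x' y y' : ℕ} (hx : x ≤ x') (hy : y' ≤ y) :
    Q L x y ≤ Q L x' y' := by
  induction L with
  | nil => simp [Q]
  | cons e L ih =>
    obtain ⟨j, s⟩ := e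
    simp only [Q]
    have h : (if ¬ SPremoved j s L ∧ (if s then j ≤ x else y ≤ j) then 1 else 0)
        ≤ (if ¬ SPremoved j s L ∧ (if s then j ≤ x' else y' ≤ j) then 1 else 0) := by
      by_cases hr : SPremoved j s L
      · simp [hr]
      · simp [hr]; cases s <;> simp <;> split_ifs <;> omega
    omega

lemma Q_snoc (L : SPPlay) (j : ℕ) (s : Bool) (hj : 1 ≤ j) (x y : ℕ) :
    Q L (min x (j - 1)) (max y (j + 1)) + (if (if s then j ≤ x else y ≤ j) then 1 else 0)
      ≤ Q (L ++ [(j, s)]) x y := by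
  induction L with
  | nil =>
    cases s <;> simp [Q, SPremoved]
  | cons e L ih =>
    obtain ⟨j0, s0⟩ := e
    rw [List.cons_append]
    simp only [Q]
    have hhead : (if ¬ SPremoved j0 s0 L ∧ (if s0 then j0 ≤ min x (j - 1) else max y (j + 1) ≤ j0) then 1 else 0)
        ≤ (if ¬ SPremoved j0 s0 (L ++ [(j, s)]) ∧ (if s0 then j0 ≤ x else y ≤ j0) then 1 else 0) := by
      by_cases hc : ¬ SPremoved j0 s0 L ∧ (if s0 then j0 ≤ min x (j - 1) else max y (j + 1) ≤ j0)
      · rw [if_pos hc]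
        obtain ⟨hr, hside⟩ := hc
        have hside' : if s0 then j0 ≤ x else y ≤ j0 := by
          cases s0 <;> simp_all
        have hr' : ¬ SPremoved j0 s0 (L ++ [(j, s)]) := by
          cases s0 <;> simp only [SPremoved, if_true, if_false, Bool.false_eq_true] at hr ⊢ <;>
            rw [not_exists] at hr ⊢ <;> intro z <;> simp only [List.mem_append, List.mem_singleton] <;>
            rintro ⟨hz | rfl, hlt⟩
          · exact hr z ⟨hz, hlt⟩
          · simp only [if_false, Bool.false_eq_true] at hside; omega
          · exact hr z ⟨hz, hlt⟩
          · simp only [if_true] at hside; omega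
        rw [if_pos ⟨hr', hside'⟩]
      · rw [if_neg hc]; omega
    have h2 := ih
    omega

lemma spValue_pick (k s : ℕ) (L : SPPlay) (j N : ℕ) (hj1 : 1 ≤ j) (hj2 : j ≤ k)
    (hfree : j ∉ L.map Prod.fst)
    (h1 : N ≤ spValue k s (L ++ [(j, true)]))
    (h2 : N ≤ spValue k s (L ++ [(j, false)])) :
    N ≤ spValue k (s + 1) L := by
  have hmem : j ∈ (Finset.Icc 1 k).filter fun j => j ∉ L.map Prod.fst :=
    Finset.mem_filter.mpr ⟨Finset.mem_Icc.mpr ⟨hj1, hj2⟩, hfree⟩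
  calc N ≤ min (spValue k s (L ++ [(j, true)])) (spValue k s (L ++ [(j, false)])) :=
        le_min h1 h2
    _ ≤ ((Finset.Icc 1 k).filter fun j => j ∉ L.map Prod.fst).sup
          (fun j => min (spValue k s (L ++ [(j, true)])) (spValue k s (L ++ [(j, false)]))) :=
        Finset.le_sup (f := fun j => min (spValue k s (L ++ [(j, true)])) (spValue k s (L ++ [(j, false)]))) hmem
    _ ≤ spValue k (s + 1) L := by rw [spValue]; exact le_max_right _ _

/-- Guaranteed number of preserved signs for the level-`t` strategy on a window of `255^t`
cells with `8^t` rounds. -/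
def gsp : ℕ → ℕ
  | 0 => 1
  | t + 1 => gsp t + 7 * ((gsp t + 1) / 2)

/-- Guaranteed gain of `d` nested level-`t` plays (binary search over `2^d - 1` blocks). -/
def hsp (t : ℕ) : ℕ → ℕ
  | 0 => 0
  | 1 => gsp t
  | d + 2 => hsp t (d + 1) + (gsp t + 1) / 2

/-- Main inductive statement: in any fresh window `[a,b]` of size `255^t`, player A can use
`8^t` rounds so that afterwards the new signs contribute `p` safe pluses and `m` safe minuses
with `p + m ≥ gsp t`, quantified via the potential `Q`. -/
def SStmt (t : ℕ) : Prop :=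
  ∀ k s N : ℕ, ∀ L : SPPlay, ∀ a b : ℕ,
    1 ≤ a → b + 1 = a + 255 ^ t → b ≤ k →
    (∀ j : ℕ, a ≤ j → j ≤ b → j ∉ L.map Prod.fst) →
    (∀ (L' : SPPlay) (p m : ℕ),
        (∀ e ∈ L', e ∈ L ∨ (a ≤ e.1 ∧ e.1 ≤ b)) →
        gsp t ≤ p + m →
        (∀ x y : ℕ,
          Q L (min x (a - 1)) (max y (b + 1)) + (if b ≤ x then p else 0)
            + (if y ≤ a then m else 0) ≤ Q L' x y) →
        N ≤ spValue k s L') →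
    N ≤ spValue k (8 ^ t + s) L

def TStmt (t d : ℕ) : Prop :=
  ∀ k s N : ℕ, ∀ L : SPPlay, ∀ a b : ℕ,
    1 ≤ a → b + 1 = a + (2 ^ d - 1) * 255 ^ t → b ≤ k →
    (∀ j : ℕ, a ≤ j → j ≤ b → j ∉ L.map Prod.fst) →
    (∀ (L' : SPPlay) (p m : ℕ),
        (∀ e ∈ L', e ∈ L ∨ (a ≤ e.1 ∧ e.1 ≤ b)) →
        hsp t d ≤ p + m →
        (∀ x y : ℕ,
          Q L (min x (a - 1)) (max y (b + 1)) + (if b ≤ x then p else 0)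
            + (if y ≤ a then m else 0) ≤ Q L' x y) →
        N ≤ spValue k s L') →
    N ≤ spValue k (d * 8 ^ t + s) L

lemma sstmt_zero : SStmt 0 := by
  intro k s N L a b ha hsz hbk hfresh H
  have hba : b = a := by omega
  subst hba
  have hgoal : N ≤ spValue k (s + 1) L := by
    apply spValue_pick k s L b N ha (le_trans le_rfl hbk) (hfresh b le_rfl le_rfl)
    · apply H (L ++ [(b, true)]) 1 0
      · intro e he
        rcases List.mem_append.mp he with h | h
        · exact Or.inl h
        · right; rw [List.mem_singleton] at h; subst h; omega
      · simp [gsp]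
      · intro x y
        have := Q_snoc L b true ha x y
        simp only [if_true] at this
        split_ifs at this ⊢ <;> omega
    · apply H (L ++ [(b, false)]) 0 1
      · intro e he
        rcases List.mem_append.mp he with h | h
        · exact Or.inl h
        · right; rw [List.mem_singleton] at h; subst h; omega
      · simp [gsp]
      · intro x y
        have := Q_snoc L b false ha x y
        simp only [if_false, Bool.false_eq_true] at this
        split_ifs at this ⊢ <;> omega
  have hpow : (8 : ℕ) ^ 0 + s = s + 1 := by norm_num; omega
  rwa [hpow]

lemma tstmt_of_sstmt (t : ℕ) (hS : SStmt t) : ∀ d, 1 ≤ d → TStmt t d := by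
  intro d
  induction d with
  | zero => omega
  | succ d ih =>
    intro _
    by_cases hd0 : d = 0
    · subst hd0
      intro k s N L a b ha hsz hbk hfresh H
      have hone : (2 ^ 1 - 1) * 255 ^ t = 255 ^ t := by norm_num
      have hsz' : b + 1 = a + 255 ^ t := by omega
      have hgoal := hS k s N L a b ha hsz' hbk hfresh
        (fun L' p m hnew hpm hQ => H L' p m hnew (by simpa [hsp] using hpm) hQ)
      have : 1 * 8 ^ t + s = 8 ^ t + s := by ring
      rwa [this]
    · have IH := ih (by omega)
      obtain ⟨e, rfl⟩ : ∃ e, d = e + 1 := ⟨d - 1, by omega⟩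
      intro k s N L a b ha hsz hbk hfresh H
      have hB : 1 ≤ 255 ^ t := Nat.one_le_pow _ _ (by norm_num)
      have h2d : 1 ≤ 2 ^ (e + 1) := Nat.one_le_pow _ _ (by norm_num)
      have hsplit : (2 ^ (e + 1 + 1) - 1) * 255 ^ t
          = (2 ^ (e + 1) - 1) * 255 ^ t + 255 ^ t + (2 ^ (e + 1) - 1) * 255 ^ t := by
        have h2s : 2 ^ (e + 1 + 1) = 2 ^ (e + 1) + 2 ^ (e + 1) := by rw [pow_succ]; omega
        have h2m : 2 ^ (e + 1 + 1) - 1 = (2 ^ (e + 1) - 1) + 1 + (2 ^ (e + 1) - 1) := by omega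
        rw [h2m, add_mul, add_mul, one_mul]
      set c := (2 ^ (e + 1) - 1) * 255 ^ t with hc
      have hsz' : b + 1 = a + c + 255 ^ t + c := by omega
      set am := a + c with ham
      set bm := a + c + 255 ^ t - 1 with hbm
      have hbm1 : bm + 1 = a + c + 255 ^ t := by omega
      set aR := a + c + 255 ^ t with haR
      have harr : (e + 1 + 1) * 8 ^ t + s = 8 ^ t + ((e + 1) * 8 ^ t + s) := by ring
      rw [harr]
      apply hS k ((e + 1) * 8 ^ t + s) N L am bm (by omega) (by omega) (by omega)
        (fun j hj1 hj2 => hfresh j (by omega) (by omega))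
      intro L1 p1 m1 hnew1 hpm1 hQ1
      rcases le_total m1 p1 with hcmp | hcmp
      · -- declare '+': recurse into the right window [aR, b]
        apply IH k s N L1 aR b (by omega) (by omega) hbk
        · intro j hj1 hj2 hmem
          rw [List.mem_map] at hmem
          obtain ⟨ee, heL1, hefst⟩ := hmem
          rcases hnew1 ee heL1 with he | ⟨hh1, hh2⟩
          · exact hfresh j (by omega) (by omega) (List.mem_map.mpr ⟨ee, he, hefst⟩)
          · omega
        · intro L' p' m' hnew' hpm' hQ'
          apply H L' (p1 + p') m'
          · intro ee he
            rcases hnew' ee he with h | h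
            · rcases hnew1 ee h with h' | h'
              · exact Or.inl h'
              · right; omega
            · right; omega
          · have hd : hsp t (e + 1 + 1) = hsp t (e + 1) + (gsp t + 1) / 2 := rfl
            omega
          · intro x y
            have h1 := hQ' x y
            have h2 := hQ1 (min x (aR - 1)) (max y (b + 1))
            have hm : Q L (min x (a - 1)) (max y (b + 1))
                ≤ Q L (min (min x (aR - 1)) (am - 1)) (max (max y (b + 1)) (bm + 1)) :=
              Q_mono L (by omega) (by omega)
            split_ifs at h1 h2 ⊢ <;> omega
      · -- declare '−': recurse into the left window [a, am - 1]
        apply IH k s N L1 a (am - 1) ha (by omega) (by omega)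
        · intro j hj1 hj2 hmem
          rw [List.mem_map] at hmem
          obtain ⟨ee, heL1, hefst⟩ := hmem
          rcases hnew1 ee heL1 with he | ⟨hh1, hh2⟩
          · exact hfresh j (by omega) (by omega) (List.mem_map.mpr ⟨ee, he, hefst⟩)
          · omega
        · intro L' p' m' hnew' hpm' hQ'
          apply H L' p' (m1 + m')
          · intro ee he
            rcases hnew' ee he with h | h
            · rcases hnew1 ee h with h' | h'
              · exact Or.inl h'
              · right; omega
            · right; omega
          · have hd : hsp t (e + 1 + 1) = hsp t (e + 1) + (gsp t + 1) / 2 := rfl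
            omega
          · intro x y
            have h1 := hQ' x y
            have h2 := hQ1 (min x (a - 1)) (max y (am - 1 + 1))
            have hm : Q L (min x (a - 1)) (max y (b + 1))
                ≤ Q L (min (min x (a - 1)) (am - 1)) (max (max y (am - 1 + 1)) (bm + 1)) :=
              Q_mono L (by omega) (by omega)
            split_ifs at h1 h2 ⊢ <;> omega

lemma sstmt_all : ∀ t, SStmt t := by
  intro t
  induction t with
  | zero => exact sstmt_zero
  | succ t ih =>
    intro k s N L a b ha hsz hbk hfresh H
    have hT := tstmt_of_sstmt t ih 8 (by norm_num)
    have hsz8 : b + 1 = a + (2 ^ 8 - 1) * 255 ^ t := by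
      have : (2 ^ 8 - 1) * 255 ^ t = 255 ^ (t + 1) := by
        rw [pow_succ]; norm_num; ring
      omega
    have hhg : hsp t 8 = gsp (t + 1) := by
      show hsp t 8 = gsp t + 7 * ((gsp t + 1) / 2)
      simp [hsp]
      omega
    have hgoal := hT k s N L a b ha hsz8 hbk hfresh
      (fun L' p m hnew hpm hQ => H L' p m hnew (by omega) hQ)
    have : 8 ^ (t + 1) + s = 8 * 8 ^ t + s := by rw [pow_succ]; ring
    rwa [this]

lemma opt_ge (t : ℕ) : gsp t ≤ opt (255 ^ t) (8 ^ t) := by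
  have hB : 1 ≤ 255 ^ t := Nat.one_le_pow _ _ (by norm_num)
  have h := sstmt_all t (255 ^ t) 0 (gsp t) [] 1 (255 ^ t) le_rfl (by omega) le_rfl
    (by simp) ?_
  · unfold opt
    have : 8 ^ t + 0 = 8 ^ t := by omega
    rwa [this] at h
  · intro L' p m hnew hpm hQ
    have hq := hQ (255 ^ t) 1
    have hle := Q_le L' (255 ^ t) 1
    have hz : Q [] (min (255 ^ t) (1 - 1)) (max 1 (255 ^ t + 1)) = 0 := by simp [Q]
    rw [hz] at hq
    rw [if_pos le_rfl, if_pos le_rfl] at hq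
    show gsp t ≤ spValue (255 ^ t) 0 L'
    have : spValue (255 ^ t) 0 L' = preservedCount L' := rfl
    omega

lemma gsp_bound (t : ℕ) : ((9 : ℝ) / 2) ^ t ≤ (gsp t : ℝ) := by
  induction t with
  | zero => simp [gsp]
  | succ t ih =>
    have hkey : (gsp t : ℝ) / 2 ≤ (((gsp t + 1) / 2 : ℕ) : ℝ) := by
      have h : gsp t ≤ 2 * ((gsp t + 1) / 2) := by omega
      have h' : (gsp t : ℝ) ≤ 2 * (((gsp t + 1) / 2 : ℕ) : ℝ) := by exact_mod_cast h
      linarith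
    have hcast : (gsp (t + 1) : ℝ) = (gsp t : ℝ) + 7 * (((gsp t + 1) / 2 : ℕ) : ℝ) := by
      show ((gsp t + 7 * ((gsp t + 1) / 2) : ℕ) : ℝ) = _
      push_cast
      ring
    have hpos : (0 : ℝ) ≤ ((9 : ℝ) / 2) ^ t := by positivity
    calc ((9 : ℝ) / 2) ^ (t + 1) = (9 / 2) * (9 / 2) ^ t := by ring
      _ ≤ (9 / 2) * (gsp t : ℝ) := by nlinarith
      _ = (gsp t : ℝ) + 7 * ((gsp t : ℝ) / 2) := by ring
      _ ≤ (gsp t : ℝ) + 7 * (((gsp t + 1) / 2 : ℕ) : ℝ) := by linarith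
      _ = (gsp (t + 1) : ℝ) := hcast.symm


/-- For every integer `t ≥ 0`, `opt(255^t, 8^t) ≥ (9/2)^t`. -/
theorem sign_preservation_255_8 (t : ℕ) :
    ((9 : ℝ) / 2) ^ t ≤ (opt (255 ^ t) (8 ^ t) : ℝ) := by
  calc ((9 : ℝ) / 2) ^ t ≤ (gsp t : ℝ) := gsp_bound t
    _ ≤ (opt (255 ^ t) (8 ^ t) : ℝ) := by exact_mod_cast opt_ge t
end

section
/- Fix a real k ≥ 1, a probability p* with the interval I = (p* − 1/(6k), p* + 1/(6k)) ⊆ [0,1], a positive integer m, and time steps t₀ < t₁. Suppose that, conditionally on the history, each adversary bit b(t) for t ∈ {t₀+1,…,t₁} is an independent sample from Bernoulli(p*). Then the probability of the event that the forecaster makes at least m predictions with values outside I during steps t₀+1,…,t₁ while calerr(t) < m/(24k) holds for every t ∈ {t₀, t₀+1, …, t₁} is at most exp(−m/(288k²)). -/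
open scoped Classical

open scoped ENNReal

/-! ### Auxiliary lemmas -/

lemma UE_chord (θ x : ℝ) (h1 : -1 ≤ x) (h2 : x ≤ 1) :
    Real.exp (θ * x) ≤ Real.cosh θ + x * Real.sinh θ := by
  have a := convexOn_exp.2 (Set.mem_univ (-θ)) (Set.mem_univ θ)
    (show (0:ℝ) ≤ (1 - x) / 2 by linarith) (show (0:ℝ) ≤ (1 + x) / 2 by linarith)
    (show (1 - x) / 2 + (1 + x) / 2 = 1 by ring)
  simp only [smul_eq_mul] at a
  have e1 : (1 - x) / 2 * (-θ) + (1 + x) / 2 * θ = θ * x := by ring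
  rw [e1] at a
  rw [Real.cosh_eq, Real.sinh_eq]
  calc Real.exp (θ * x) ≤ (1 - x) / 2 * Real.exp (-θ) + (1 + x) / 2 * Real.exp θ := a
    _ = (Real.exp θ + Real.exp (-θ)) / 2 + x * ((Real.exp θ - Real.exp (-θ)) / 2) := by ring

lemma UE_mgf (q θ : ℝ) (h0 : 0 ≤ q) (h1 : q ≤ 1) :
    q * Real.exp (θ * (1 - q)) + (1 - q) * Real.exp (θ * (-q)) ≤ Real.exp (θ ^ 2 / 2) := by
  have c1 := UE_chord θ (1 - q) (by linarith) (by linarith)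
  have c2 := UE_chord θ (-q) (by linarith) (by linarith)
  have hch := Real.cosh_le_exp_half_sq θ
  have m1 := mul_le_mul_of_nonneg_left c1 h0
  have m2 := mul_le_mul_of_nonneg_left c2 (by linarith : (0:ℝ) ≤ 1 - q)
  have key : q * (Real.cosh θ + (1 - q) * Real.sinh θ)
      + (1 - q) * (Real.cosh θ + (-q) * Real.sinh θ) = Real.cosh θ := by ring
  linarith

lemma bias_nil (p : ℝ) : bias [] p = 0 := by simp [bias]

lemma bias_append_s8 (l₁ l₂ : Transcript) (p : ℝ) :
    bias (l₁ ++ l₂) p = bias l₁ p + bias l₂ p := by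
  simp only [bias, List.filter_append, List.length_append]
  push_cast; ring

lemma bias_eq_zero (l : Transcript) (p : ℝ) (hp : p ∉ (l.map Prod.fst).toFinset) :
    bias l p = 0 := by
  have h1 : ∀ x ∈ l, ¬ (x.1 = p) := by
    intro x hx hxp
    exact hp (by simp only [List.mem_toFinset, List.mem_map]; exact ⟨x, hx, hxp⟩)
  have e1 : (l.filter fun x => decide (x.1 = p ∧ x.2 = true)) = [] := by
    rw [List.filter_eq_nil_iff]
    intro x hx
    simp only [decide_eq_true_eq, not_and]
    intro hxp; exact absurd hxp (h1 x hx)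
  have e2 : (l.filter fun x => decide (x.1 = p)) = [] := by
    rw [List.filter_eq_nil_iff]
    intro x hx
    simp only [decide_eq_true_eq]
    exact h1 x hx
  rw [bias, e1, e2]; simp

lemma bias_single (q : ℝ) (b : Bool) :
    bias [(q, b)] q = (if b = true then (1:ℝ) else 0) - q := by
  cases b <;> simp [bias]

noncomputable def UEw (pstar ε p : ℝ) : ℝ :=
  if p ∉ Set.Ioo (pstar - ε) (pstar + ε) then (if p ≤ pstar then (1:ℝ) else -1) else 0

noncomputable def UEg (pstar ε : ℝ) (x : ℝ × Bool) : ℝ :=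
  UEw pstar ε x.1 * ((if x.2 = true then (1:ℝ) else 0) - x.1)

lemma UEw_abs_le (pstar ε p : ℝ) : |UEw pstar ε p| ≤ 1 := by
  unfold UEw; split_ifs <;> simp

lemma sum_map_g (pstar ε : ℝ) : ∀ (d : Transcript) (s : Finset ℝ), (∀ x ∈ d, x.1 ∈ s) →
    (d.map (UEg pstar ε)).sum = ∑ p ∈ s, UEw pstar ε p * bias d p := by
  intro d
  induction d with
  | nil => intro s _; simp [bias_nil]
  | cons x tl ih =>
    intro s hs
    have hx : x.1 ∈ s := hs x List.mem_cons_self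
    have htl : ∀ y ∈ tl, y.1 ∈ s := fun y hy => hs y (List.mem_cons_of_mem x hy)
    have hrw : ∀ p : ℝ, bias (x :: tl) p = bias [x] p + bias tl p := fun p => by
      have h0 : x :: tl = [x] ++ tl := rfl
      rw [h0, bias_append_s8]
    simp only [List.map_cons, List.sum_cons]
    simp only [hrw, mul_add]
    rw [Finset.sum_add_distrib, ← ih s htl]
    congr 1
    rw [Finset.sum_eq_single x.1]
    · obtain ⟨q, b⟩ := x
      rw [bias_single]
      rfl
    · intro p _ hne
      rw [bias_eq_zero [x] p (by simpa using hne), mul_zero]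
    · intro hxs; exact absurd hx hxs

lemma UEZ_le (pstar ε : ℝ) (t₀ : ℕ) (h : Transcript) :
    ((h.drop t₀).map (UEg pstar ε)).sum ≤ calErr h + calErr (h.take t₀) := by
  set d := h.drop t₀ with hd
  set tk := h.take t₀ with htk
  set s := (d.map Prod.fst).toFinset with hsdef
  have hg := sum_map_g pstar ε d s (fun x hx => by
    simp only [hsdef, List.mem_toFinset, List.mem_map]; exact ⟨x, hx, rfl⟩)
  rw [hg]
  have hsplit : ∀ p : ℝ, bias h p = bias tk p + bias d p := fun p => by
    conv_lhs => rw [← List.take_append_drop t₀ h]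
    rw [bias_append_s8]
  have hbd : ∀ p ∈ s, UEw pstar ε p * bias d p ≤ |bias h p| + |bias tk p| := by
    intro p _
    calc UEw pstar ε p * bias d p ≤ |UEw pstar ε p * bias d p| := le_abs_self _
      _ = |UEw pstar ε p| * |bias d p| := abs_mul _ _
      _ ≤ 1 * |bias d p| := mul_le_mul_of_nonneg_right (UEw_abs_le _ _ _) (abs_nonneg _)
      _ = |bias h p - bias tk p| := by rw [one_mul, hsplit p]; ring_nf
      _ ≤ |bias h p| + |bias tk p| := abs_sub _ _
  have hA : ∑ p ∈ s, |bias h p| ≤ calErr h := by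
    apply Finset.sum_le_sum_of_subset_of_nonneg
    · intro p hp
      simp only [hsdef, List.mem_toFinset, List.mem_map] at hp ⊢
      obtain ⟨x, hx, hxp⟩ := hp
      exact ⟨x, List.mem_of_mem_drop hx, hxp⟩
    · intro _ _ _; exact abs_nonneg _
  have hB : ∑ p ∈ s, |bias tk p| ≤ calErr tk := by
    have e : ∑ p ∈ (tk.map Prod.fst).toFinset, |bias tk p|
        = ∑ p ∈ s ∪ (tk.map Prod.fst).toFinset, |bias tk p| := by
      apply Finset.sum_subset Finset.subset_union_right
      intro p _ hpT
      rw [bias_eq_zero tk p hpT, abs_zero]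
    calc ∑ p ∈ s, |bias tk p| ≤ ∑ p ∈ s ∪ (tk.map Prod.fst).toFinset, |bias tk p| :=
          Finset.sum_le_sum_of_subset_of_nonneg Finset.subset_union_left
            (fun _ _ _ => abs_nonneg _)
      _ = calErr tk := by rw [← e, calErr]
  calc ∑ p ∈ s, UEw pstar ε p * bias d p ≤ ∑ p ∈ s, (|bias h p| + |bias tk p|) :=
        Finset.sum_le_sum hbd
    _ = (∑ p ∈ s, |bias h p|) + ∑ p ∈ s, |bias tk p| := Finset.sum_add_distrib
    _ ≤ calErr h + calErr tk := add_le_add hA hB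

lemma UE_tsum_bind {α β : Type*} (p : PMF α) (f : α → PMF β) (g : β → ℝ≥0∞) :
    ∑' b, p.bind f b * g b = ∑' a, p a * ∑' b, f a b * g b := by
  simp only [PMF.bind_apply]
  calc ∑' b, (∑' a, p a * f a b) * g b
      = ∑' b, ∑' a, p a * f a b * g b :=
        tsum_congr fun b => ENNReal.tsum_mul_right.symm
    _ = ∑' a, ∑' b, p a * f a b * g b := ENNReal.tsum_comm
    _ = ∑' a, p a * ∑' b, f a b * g b := tsum_congr fun a => by
        rw [← ENNReal.tsum_mul_left]
        exact tsum_congr fun b => by rw [mul_assoc]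

lemma UE_tsum_pure {γ : Type*} (c₀ : γ) (g : γ → ℝ≥0∞) :
    ∑' c, (PMF.pure c₀) c * g c = g c₀ := by
  rw [tsum_eq_single c₀ (fun c hc => by rw [PMF.pure_apply_of_ne _ _ hc, zero_mul])]
  rw [PMF.pure_apply_self, one_mul]

lemma UE_tsum_map {β γ : Type*} (q : PMF β) (e : β → γ) (g : γ → ℝ≥0∞) :
    ∑' c, (q.map e) c * g c = ∑' b, q b * g (e b) := by
  rw [PMF.map, UE_tsum_bind]
  exact tsum_congr fun b => by simp only [Function.comp_apply]; rw [UE_tsum_pure]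

lemma playDist_length (F : Transcript → PMF ℝ) (A : Transcript → PMF Bool) :
    ∀ T (h : Transcript), h ∈ (playDist F A T).support → h.length = T := by
  intro T
  induction T with
  | zero =>
    intro h hh
    simp only [playDist, PMF.support_pure, Set.mem_singleton_iff] at hh
    simp [hh]
  | succ T ih =>
    intro h hh
    simp only [playDist] at hh
    rw [PMF.mem_support_bind_iff] at hh
    obtain ⟨h', hh', hmem⟩ := hh
    rw [PMF.mem_support_bind_iff] at hmem
    obtain ⟨p, _, hmem⟩ := hmem
    rw [PMF.support_map] at hmem
    obtain ⟨b, _, rfl⟩ := hmem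
    simp [ih h' hh']

noncomputable def UEW (pstar ε lam : ℝ) (t₀ : ℕ) (h : Transcript) : ℝ :=
  Real.exp ((lam * ε - lam ^ 2 / 2) *
      (((h.drop t₀).filter fun x => decide (x.1 ∉ Set.Ioo (pstar - ε) (pstar + ε))).length : ℝ)
    - lam * ((h.drop t₀).map (UEg pstar ε)).sum)

lemma UEW_append (pstar ε lam : ℝ) (t₀ : ℕ) (h : Transcript) (hlen : t₀ ≤ h.length)
    (x : ℝ × Bool) :
    UEW pstar ε lam t₀ (h ++ [x]) = UEW pstar ε lam t₀ h *
      Real.exp ((lam * ε - lam ^ 2 / 2) *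
          (if x.1 ∉ Set.Ioo (pstar - ε) (pstar + ε) then (1:ℝ) else 0)
        - lam * UEg pstar ε x) := by
  have hdrop : (h ++ [x]).drop t₀ = h.drop t₀ ++ [x] := List.drop_append_of_le_length hlen
  rw [UEW, UEW, hdrop, List.filter_append, List.map_append, List.length_append,
    List.sum_append, ← Real.exp_add]
  congr 1
  by_cases hx : x.1 ∉ Set.Ioo (pstar - ε) (pstar + ε)
  · have hf : (List.filter (fun x => decide (x.1 ∉ Set.Ioo (pstar - ε) (pstar + ε))) [x])
        = [x] := by
      simp only [List.filter_singleton, decide_eq_true hx, cond_true]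
    rw [hf, if_pos hx]
    simp only [List.map_cons, List.map_nil, List.sum_cons, List.sum_nil, List.length_singleton]
    push_cast; ring
  · have hf : (List.filter (fun x => decide (x.1 ∉ Set.Ioo (pstar - ε) (pstar + ε))) [x])
        = [] := by
      simp only [List.filter_singleton, decide_eq_false hx, cond_false]
    rw [hf, if_neg hx]
    simp only [List.map_cons, List.map_nil, List.sum_cons, List.sum_nil, List.length_nil]
    push_cast; ring

lemma UE_step_core (pstar ε lam σ p : ℝ) (hσ : σ = 1 ∨ σ = -1) (hp0 : 0 ≤ pstar)
    (hp1 : pstar ≤ 1) (hlam : 0 < lam) (hgap : ε ≤ σ * (pstar - p)) :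
    pstar * Real.exp ((lam * ε - lam ^ 2 / 2) - lam * (σ * (1 - p)))
      + (1 - pstar) * Real.exp ((lam * ε - lam ^ 2 / 2) - lam * (σ * (0 - p))) ≤ 1 := by
  set c := lam * ε - lam ^ 2 / 2 with hc
  set θ := -(lam * σ) with hθ
  have hσ2 : σ ^ 2 = 1 := by rcases hσ with h | h <;> rw [h] <;> norm_num
  have hθ2 : θ ^ 2 = lam ^ 2 := by
    have e : θ ^ 2 = lam ^ 2 * σ ^ 2 := by rw [hθ]; ring
    rw [e, hσ2, mul_one]
  have hgap' : lam * ε ≤ lam * (σ * (pstar - p)) := mul_le_mul_of_nonneg_left hgap hlam.le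
  have h1 : c - lam * (σ * (1 - p)) ≤ (c - lam * ε) + θ * (1 - pstar) := by
    have e : lam * (σ * (1 - p)) = lam * (σ * (1 - pstar)) + lam * (σ * (pstar - p)) := by ring
    have e2 : θ * (1 - pstar) = -(lam * (σ * (1 - pstar))) := by rw [hθ]; ring
    rw [e, e2]; linarith
  have h2 : c - lam * (σ * (0 - p)) ≤ (c - lam * ε) + θ * (-pstar) := by
    have e : lam * (σ * (0 - p)) = lam * (σ * (0 - pstar)) + lam * (σ * (pstar - p)) := by ring
    have e2 : θ * (-pstar) = -(lam * (σ * (0 - pstar))) := by rw [hθ]; ring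
    rw [e, e2]; linarith
  calc pstar * Real.exp (c - lam * (σ * (1 - p)))
        + (1 - pstar) * Real.exp (c - lam * (σ * (0 - p)))
      ≤ pstar * Real.exp ((c - lam * ε) + θ * (1 - pstar))
        + (1 - pstar) * Real.exp ((c - lam * ε) + θ * (-pstar)) :=
        add_le_add (mul_le_mul_of_nonneg_left (Real.exp_le_exp.mpr h1) hp0)
          (mul_le_mul_of_nonneg_left (Real.exp_le_exp.mpr h2) (by linarith))
    _ = Real.exp (c - lam * ε)
        * (pstar * Real.exp (θ * (1 - pstar)) + (1 - pstar) * Real.exp (θ * (-pstar))) := by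
        rw [Real.exp_add, Real.exp_add]; ring
    _ ≤ Real.exp (c - lam * ε) * Real.exp (θ ^ 2 / 2) :=
        mul_le_mul_of_nonneg_left (UE_mgf pstar θ hp0 hp1) (Real.exp_nonneg _)
    _ = Real.exp (c - lam * ε + θ ^ 2 / 2) := (Real.exp_add _ _).symm
    _ = 1 := by
        have e : c - lam * ε + θ ^ 2 / 2 = 0 := by rw [hθ2, hc]; ring
        rw [e]
        exact Real.exp_zero

lemma UE_step (pstar ε lam p : ℝ) (hp0 : 0 ≤ pstar) (hp1 : pstar ≤ 1) (hlam : 0 < lam) :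
    pstar * Real.exp ((lam * ε - lam ^ 2 / 2) *
          (if p ∉ Set.Ioo (pstar - ε) (pstar + ε) then (1:ℝ) else 0)
        - lam * UEg pstar ε (p, true))
      + (1 - pstar) * Real.exp ((lam * ε - lam ^ 2 / 2) *
          (if p ∉ Set.Ioo (pstar - ε) (pstar + ε) then (1:ℝ) else 0)
        - lam * UEg pstar ε (p, false)) ≤ 1 := by
  by_cases hmem : p ∈ Set.Ioo (pstar - ε) (pstar + ε)
  · simp [UEg, UEw, hmem]
  · rw [if_pos hmem, mul_one]
    rw [Set.mem_Ioo, not_and_or, not_lt, not_lt] at hmem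
    by_cases hple : p ≤ pstar
    · have hσ : UEw pstar ε p = 1 := by
        rw [UEw, if_pos (by rw [Set.mem_Ioo, not_and_or, not_lt, not_lt]; exact hmem),
          if_pos hple]
      have hgap : ε ≤ 1 * (pstar - p) := by
        rcases hmem with h | h
        · linarith
        · linarith
      have := UE_step_core pstar ε lam 1 p (Or.inl rfl) hp0 hp1 hlam hgap
      simpa [UEg, hσ] using this
    · have hσ : UEw pstar ε p = -1 := by
        rw [UEw, if_pos (by rw [Set.mem_Ioo, not_and_or, not_lt, not_lt]; exact hmem),
          if_neg hple]
      push_neg at hple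
      have hgap : ε ≤ (-1) * (pstar - p) := by
        rcases hmem with h | h
        · linarith
        · linarith
      have := UE_step_core pstar ε lam (-1) p (Or.inr rfl) hp0 hp1 hlam hgap
      simpa [UEg, hσ] using this

lemma UE_super (F : Transcript → PMF ℝ) (A : Transcript → PMF Bool)
    (pstar ε lam : ℝ) (hp0 : 0 ≤ pstar) (hp1 : pstar ≤ 1) (hlam : 0 < lam)
    (t₀ t₁ : ℕ)
    (hA : ∀ h : Transcript, t₀ ≤ h.length → h.length < t₁ → A h = bern pstar) :
    ∀ T, t₀ ≤ T → T ≤ t₁ →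
      ∑' h : Transcript, playDist F A T h * ENNReal.ofReal (UEW pstar ε lam t₀ h) ≤ 1 := by
  intro T hT
  induction T, hT using Nat.le_induction with
  | base =>
    intro _
    have hpt : ∀ h : Transcript,
        playDist F A t₀ h * ENNReal.ofReal (UEW pstar ε lam t₀ h) ≤ playDist F A t₀ h := by
      intro h
      by_cases hμ : playDist F A t₀ h = 0
      · rw [hμ, zero_mul]
      · have hlen : h.length = t₀ :=
          playDist_length F A t₀ h ((PMF.mem_support_iff _ _).mpr hμ)
        have hdrop : h.drop t₀ = [] := by rw [← hlen]; exact List.drop_length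
        rw [UEW, hdrop]
        simp
    calc ∑' h : Transcript, playDist F A t₀ h * ENNReal.ofReal (UEW pstar ε lam t₀ h)
        ≤ ∑' h : Transcript, playDist F A t₀ h := ENNReal.tsum_le_tsum hpt
      _ = 1 := PMF.tsum_coe _
  | succ T hT ih =>
    intro hT1
    have hTlt : T < t₁ := hT1
    have hih := ih (le_of_lt hTlt)
    have hrw : playDist F A (T + 1) = (playDist F A T).bind fun h =>
        (F h).bind fun p => (A h).map fun b => h ++ [(p, b)] := rfl
    rw [hrw, UE_tsum_bind]
    refine le_trans (ENNReal.tsum_le_tsum fun h => ?_) hih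
    by_cases hμ : playDist F A T h = 0
    · rw [hμ, zero_mul, zero_mul]
    refine mul_le_mul_right ?_ _
    rw [UE_tsum_bind]
    have hlen : h.length = T := playDist_length F A T h ((PMF.mem_support_iff _ _).mpr hμ)
    have hAh : A h = bern pstar := hA h (hlen ▸ hT) (hlen ▸ hTlt)
    have hqle : pstar.toNNReal ≤ 1 := ENNReal.coe_le_one_iff.mp (ENNReal.ofReal_le_one.mpr hp1)
    have hbern : bern pstar = PMF.bernoulli _ hqle := by
      rw [bern, dif_pos (ENNReal.ofReal_le_one.mpr hp1)]
    have hWh : (0:ℝ) ≤ UEW pstar ε lam t₀ h := (Real.exp_pos _).le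
    calc ∑' p : ℝ, F h p * ∑' h' : Transcript,
          ((A h).map fun b => h ++ [(p, b)]) h' * ENNReal.ofReal (UEW pstar ε lam t₀ h')
        ≤ ∑' p : ℝ, F h p * ENNReal.ofReal (UEW pstar ε lam t₀ h) := by
          refine ENNReal.tsum_le_tsum fun p => mul_le_mul_right ?_ _
          rw [UE_tsum_map, hAh, hbern, tsum_bool]
          have hW : ∀ b : Bool, UEW pstar ε lam t₀ (h ++ [(p, b)])
              = UEW pstar ε lam t₀ h * Real.exp ((lam * ε - lam ^ 2 / 2) *
                  (if p ∉ Set.Ioo (pstar - ε) (pstar + ε) then (1:ℝ) else 0)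
                - lam * UEg pstar ε (p, b)) :=
            fun b => UEW_append pstar ε lam t₀ h (hlen ▸ hT) (p, b)
          rw [hW true, hW false, PMF.bernoulli_apply, PMF.bernoulli_apply]
          simp only [Bool.cond_false, Bool.cond_true]
          set ef := Real.exp ((lam * ε - lam ^ 2 / 2) *
              (if p ∉ Set.Ioo (pstar - ε) (pstar + ε) then (1:ℝ) else 0)
            - lam * UEg pstar ε (p, false)) with hef
          set et := Real.exp ((lam * ε - lam ^ 2 / 2) *
              (if p ∉ Set.Ioo (pstar - ε) (pstar + ε) then (1:ℝ) else 0)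
            - lam * UEg pstar ε (p, true)) with het
          have hef0 : (0:ℝ) ≤ ef := by rw [hef]; exact (Real.exp_pos _).le
          have het0 : (0:ℝ) ≤ et := by rw [het]; exact (Real.exp_pos _).le
          have h1q : (1 : ℝ≥0∞) - ENNReal.ofReal pstar = ENNReal.ofReal (1 - pstar) := by
            rw [ENNReal.ofReal_sub 1 hp0, ENNReal.ofReal_one]
          have hc : ((pstar.toNNReal : NNReal) : ℝ≥0∞) = ENNReal.ofReal pstar := rfl
          have h1c : ((1 - pstar.toNNReal : NNReal) : ℝ≥0∞) = 1 - ENNReal.ofReal pstar := by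
            rw [ENNReal.coe_sub, ENNReal.coe_one]; rfl
          rw [h1c, hc]
          rw [h1q, ← ENNReal.ofReal_mul (by linarith : (0:ℝ) ≤ 1 - pstar),
            ← ENNReal.ofReal_mul hp0,
            ← ENNReal.ofReal_add (mul_nonneg (by linarith) (mul_nonneg hWh hef0))
              (mul_nonneg hp0 (mul_nonneg hWh het0))]
          apply ENNReal.ofReal_le_ofReal
          have hsum : pstar * et + (1 - pstar) * ef ≤ 1 :=
            UE_step pstar ε lam p hp0 hp1 hlam
          calc (1 - pstar) * (UEW pstar ε lam t₀ h * ef)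
                + pstar * (UEW pstar ε lam t₀ h * et)
              = UEW pstar ε lam t₀ h * (pstar * et + (1 - pstar) * ef) := by ring
            _ ≤ UEW pstar ε lam t₀ h * 1 := mul_le_mul_of_nonneg_left hsum hWh
            _ = UEW pstar ε lam t₀ h := mul_one _
      _ = ENNReal.ofReal (UEW pstar ε lam t₀ h) := by
          rw [ENNReal.tsum_mul_right, PMF.tsum_coe, one_mul]


/-- **untruthful epochs.** Fix a real `k ≥ 1`, a probability `p*` with the
interval `I = (p* − 1/(6k), p* + 1/(6k)) ⊆ [0,1]`, a positive integer `m`, and time steps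
`t₀ < t₁`. Suppose that, conditionally on the history, each adversary bit `b(t)` for
`t ∈ {t₀+1,…,t₁}` is an independent sample from `Bernoulli(p*)`. Then the probability that the
forecaster makes at least `m` predictions with values outside `I` during steps `t₀+1,…,t₁`
while `calerr(t) < m/(24k)` holds for every `t ∈ {t₀, …, t₁}` is at most `exp(−m/(288k²))`. -/
theorem untruthful_epoch_large_error (k : ℝ) (hk : 1 ≤ k) (pstar : ℝ)
    (hI : Set.Ioo (pstar - 1 / (6 * k)) (pstar + 1 / (6 * k)) ⊆ Set.Icc (0 : ℝ) 1)
    (m : ℕ) (hm : 0 < m) (t₀ t₁ : ℕ) (ht : t₀ < t₁)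
    (F : Transcript → PMF ℝ) (A : Transcript → PMF Bool)
    (hA : ∀ h : Transcript, t₀ ≤ h.length → h.length < t₁ → A h = bern pstar) :
    prEvent (playDist F A t₁) (fun h =>
        m ≤ ((h.drop t₀).filter fun x =>
              decide (x.1 ∉ Set.Ioo (pstar - 1 / (6 * k)) (pstar + 1 / (6 * k)))).length ∧
        ∀ t : ℕ, t₀ ≤ t → t ≤ t₁ → calErr (h.take t) < m / (24 * k))
      ≤ Real.exp (-(m / (288 * k ^ 2))) := by
  classical
  have hk0 : (0:ℝ) < k := by linarith
  have hε0 : (0:ℝ) < 1 / (6 * k) := by positivity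
  have hps : pstar ∈ Set.Icc (0:ℝ) 1 := hI ⟨by linarith, by linarith⟩
  obtain ⟨hp0, hp1⟩ := hps
  set ε : ℝ := 1 / (6 * k) with hεdef
  set lam : ℝ := 1 / (12 * k) with hlamdef
  have hlam : 0 < lam := by rw [hlamdef]; positivity
  have hsuper := UE_super F A pstar ε lam hp0 hp1 hlam t₀ t₁ hA t₁ (le_of_lt ht) le_rfl
  set μ := playDist F A t₁ with hμdef
  rw [prEvent]
  set a : ℝ := (m : ℝ) / (288 * k ^ 2) with hadef
  have key : ∀ h : Transcript,
      (if (m ≤ ((h.drop t₀).filter fun x =>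
            decide (x.1 ∉ Set.Ioo (pstar - ε) (pstar + ε))).length ∧
          ∀ t : ℕ, t₀ ≤ t → t ≤ t₁ → calErr (h.take t) < m / (24 * k)) then μ h else 0)
        * ENNReal.ofReal (Real.exp a)
      ≤ μ h * ENNReal.ofReal (UEW pstar ε lam t₀ h) := by
    intro h
    split_ifs with hE
    · by_cases hμ0 : μ h = 0
      · rw [hμ0, zero_mul, zero_mul]
      refine mul_le_mul_right (ENNReal.ofReal_le_ofReal ?_) _
      have hlen : h.length = t₁ :=
        playDist_length F A t₁ h ((PMF.mem_support_iff _ _).mpr hμ0)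
      rw [UEW]
      apply Real.exp_le_exp.mpr
      obtain ⟨hN, hcal⟩ := hE
      have hNr : (m:ℝ) ≤ (((h.drop t₀).filter fun x =>
          decide (x.1 ∉ Set.Ioo (pstar - ε) (pstar + ε))).length : ℝ) := by
        exact_mod_cast hN
      have hZ := UEZ_le pstar ε t₀ h
      have hc1 : calErr h < m / (24 * k) := by
        have h2 := hcal t₁ (le_of_lt ht) le_rfl
        rwa [← hlen, List.take_length] at h2
      have hc0 : calErr (h.take t₀) < m / (24 * k) := hcal t₀ le_rfl (le_of_lt ht)
      have he24 : (m:ℝ) / (24 * k) + (m:ℝ) / (24 * k) = (m:ℝ) / (12 * k) := by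
        field_simp; ring
      have hZle : ((h.drop t₀).map (UEg pstar ε)).sum ≤ (m:ℝ) / (12 * k) := by linarith
      have hcpos : (0:ℝ) ≤ lam * ε - lam ^ 2 / 2 := by
        have hceq : lam * ε - lam ^ 2 / 2 = 1 / (96 * k ^ 2) := by
          rw [hεdef, hlamdef]; field_simp; ring
        rw [hceq]; positivity
      have h1 : (lam * ε - lam ^ 2 / 2) * (m:ℝ)
          ≤ (lam * ε - lam ^ 2 / 2) * (((h.drop t₀).filter fun x =>
            decide (x.1 ∉ Set.Ioo (pstar - ε) (pstar + ε))).length : ℝ) :=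
        mul_le_mul_of_nonneg_left hNr hcpos
      have h2 : lam * ((h.drop t₀).map (UEg pstar ε)).sum ≤ lam * ((m:ℝ) / (12 * k)) :=
        mul_le_mul_of_nonneg_left hZle hlam.le
      have h3 : (lam * ε - lam ^ 2 / 2) * (m:ℝ) - lam * ((m:ℝ) / (12 * k)) = a := by
        rw [hadef, hεdef, hlamdef]; field_simp; ring
      linarith
    · rw [zero_mul]; exact zero_le
  have hsum : (∑' h : Transcript, if (m ≤ ((h.drop t₀).filter fun x =>
            decide (x.1 ∉ Set.Ioo (pstar - ε) (pstar + ε))).length ∧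
          ∀ t : ℕ, t₀ ≤ t → t ≤ t₁ → calErr (h.take t) < m / (24 * k)) then μ h else 0)
        * ENNReal.ofReal (Real.exp a) ≤ 1 := by
    rw [← ENNReal.tsum_mul_right]
    exact le_trans (ENNReal.tsum_le_tsum key) hsuper
  have hC0 : ENNReal.ofReal (Real.exp a) ≠ 0 :=
    ne_of_gt (ENNReal.ofReal_pos.mpr (Real.exp_pos a))
  have hCt : ENNReal.ofReal (Real.exp a) ≠ ⊤ := ENNReal.ofReal_ne_top
  have hle := (ENNReal.le_div_iff_mul_le (Or.inl hC0) (Or.inl hCt)).mpr hsum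
  have hinv : (1:ℝ≥0∞) / ENNReal.ofReal (Real.exp a) = ENNReal.ofReal (Real.exp (-a)) := by
    rw [one_div, ← ENNReal.ofReal_inv_of_pos (Real.exp_pos a), ← Real.exp_neg]
  rw [hinv] at hle
  refine ENNReal.toReal_le_of_le_ofReal (Real.exp_nonneg _) ?_
  refine le_trans (le_of_eq (tsum_congr fun h => ?_)) hle
  split_ifs <;> rfl
end

section
/- Fix any sequences p(1), …, p(T) ∈ [0,1] of predictions and b(1), …, b(T) ∈ {0,1} of bits. For each t, let p'(t) be p(t) rounded to a nearest multiple of 1/T. Let calerr(T) = Σ_p |Σ_{t : p(t) = p} (b(t) − p)| (sum over distinct values p of the original predictions) and calerr'(T) = Σ_q |Σ_{t : p'(t) = q} (b(t) − q)| (sum over distinct values q of the rounded predictions). Then calerr'(T) ≤ calerr(T) + 1/2. -/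
open scoped Classical

/-- **rounding to multiples of 1/T.** Fix predictions `p(1), …, p(T) ∈ [0,1]` and
bits `b(1), …, b(T) ∈ {0,1}`. For each `t`, let `p'(t) = ρ(p(t))` be `p(t)` rounded to a nearest
multiple of `1/T`. With `calerr(T) = Σ_v |Σ_{t : p(t) = v} (b(t) − v)|` (sum over distinct values
of the original predictions) and `calerr'(T)` defined analogously from the rounded predictions,
we have `calerr'(T) ≤ calerr(T) + 1/2`. -/
theorem rounding_predictions_cost (T : ℕ) (hT : 1 ≤ T)
    (p : Fin T → ℝ) (hp : ∀ t, p t ∈ Set.Icc (0 : ℝ) 1) (b : Fin T → Bool)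
    (ρ : ℝ → ℝ)
    (hρ : ∀ t, (∃ j : ℤ, ρ (p t) = (j : ℝ) / T) ∧ |ρ (p t) - p t| ≤ 1 / (2 * T)) :
    ∑ v ∈ Finset.univ.image (fun t => ρ (p t)),
        |∑ t ∈ Finset.univ.filter (fun t => ρ (p t) = v), ((if b t then (1 : ℝ) else 0) - v)|
      ≤ (∑ v ∈ Finset.univ.image p,
          |∑ t ∈ Finset.univ.filter (fun t => p t = v), ((if b t then (1 : ℝ) else 0) - v)|)
        + 1 / 2 := by
  classical
  set S := Finset.univ.image p with hS
  set R := Finset.univ.image (fun t => ρ (p t)) with hR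
  have hρ' : ∀ v ∈ S, |ρ v - v| ≤ 1 / (2 * T) := by
    intro v hv
    obtain ⟨t, _, ht⟩ := Finset.mem_image.mp hv
    subst ht; exact (hρ t).2
  have key : ∀ q ∈ R,
      |∑ t ∈ Finset.univ.filter (fun t => ρ (p t) = q), ((if b t then (1:ℝ) else 0) - q)|
      ≤ ∑ v ∈ S.filter (fun v => ρ v = q),
          (|∑ t ∈ Finset.univ.filter (fun t => p t = v), ((if b t then (1:ℝ) else 0) - v)|
           + ((Finset.univ.filter (fun t => p t = v)).card : ℝ) * (1/(2*T))) := by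
    intro q hq
    have hmaps : ∀ t ∈ Finset.univ.filter (fun t => ρ (p t) = q),
        p t ∈ S.filter (fun v => ρ v = q) := by
      intro t ht
      simp only [Finset.mem_filter, Finset.mem_univ, true_and] at ht ⊢
      exact ⟨Finset.mem_image_of_mem p (Finset.mem_univ t), ht⟩
    rw [← Finset.sum_fiberwise_of_maps_to hmaps (fun t => (if b t then (1:ℝ) else 0) - q)]
    refine le_trans (Finset.abs_sum_le_sum_abs _ _) (Finset.sum_le_sum ?_)
    intro v hv
    obtain ⟨hvS, hvq⟩ := Finset.mem_filter.mp hv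
    have hfilter : (Finset.univ.filter (fun t => ρ (p t) = q)).filter (fun t => p t = v)
        = Finset.univ.filter (fun t => p t = v) := by
      ext t
      simp only [Finset.mem_filter, Finset.mem_univ, true_and]
      exact ⟨fun h => h.2, fun h => ⟨by rw [h, hvq], h⟩⟩
    rw [hfilter]
    have hsplit : ∑ t ∈ Finset.univ.filter (fun t => p t = v), ((if b t then (1:ℝ) else 0) - q)
        = (∑ t ∈ Finset.univ.filter (fun t => p t = v), ((if b t then (1:ℝ) else 0) - v))
          + ((Finset.univ.filter (fun t => p t = v)).card : ℝ) * (v - q) := by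
      rw [Finset.sum_congr rfl (fun t _ => by ring :
            ∀ t ∈ Finset.univ.filter (fun t => p t = v),
              ((if b t then (1:ℝ) else 0) - q) = ((if b t then (1:ℝ) else 0) - v) + (v - q)),
          Finset.sum_add_distrib, Finset.sum_const, nsmul_eq_mul]
    rw [hsplit]
    refine le_trans (abs_add_le _ _) (by
      gcongr
      rw [abs_mul, abs_of_nonneg (by positivity : (0:ℝ) ≤ ((Finset.univ.filter (fun t => p t = v)).card : ℝ))]
      gcongr
      have := hρ' v hvS
      rw [← hvq]
      rw [abs_sub_comm]
      exact this)
  have hmaps2 : ∀ v ∈ S, ρ v ∈ R := by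
    intro v hv
    obtain ⟨t, _, ht⟩ := Finset.mem_image.mp hv
    subst ht
    exact Finset.mem_image_of_mem _ (Finset.mem_univ t)
  calc ∑ q ∈ R, |∑ t ∈ Finset.univ.filter (fun t => ρ (p t) = q), ((if b t then (1:ℝ) else 0) - q)|
      ≤ ∑ q ∈ R, ∑ v ∈ S.filter (fun v => ρ v = q),
          (|∑ t ∈ Finset.univ.filter (fun t => p t = v), ((if b t then (1:ℝ) else 0) - v)|
           + ((Finset.univ.filter (fun t => p t = v)).card : ℝ) * (1/(2*T))) :=
        Finset.sum_le_sum key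
    _ = ∑ v ∈ S,
          (|∑ t ∈ Finset.univ.filter (fun t => p t = v), ((if b t then (1:ℝ) else 0) - v)|
           + ((Finset.univ.filter (fun t => p t = v)).card : ℝ) * (1/(2*T))) :=
        Finset.sum_fiberwise_of_maps_to hmaps2 _
    _ = (∑ v ∈ S, |∑ t ∈ Finset.univ.filter (fun t => p t = v), ((if b t then (1:ℝ) else 0) - v)|)
        + (∑ v ∈ S, ((Finset.univ.filter (fun t => p t = v)).card : ℝ)) * (1/(2*T)) := by
        rw [Finset.sum_add_distrib, Finset.sum_mul]
    _ ≤ _ := by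
        gcongr
        have hcard : ∑ v ∈ S, ((Finset.univ.filter (fun t => p t = v)).card : ℝ) = T := by
          have hmaps3 : ∀ t ∈ (Finset.univ : Finset (Fin T)), p t ∈ S :=
            fun t _ => Finset.mem_image_of_mem p (Finset.mem_univ t)
          have := Finset.sum_fiberwise_of_maps_to hmaps3 (fun _ => (1:ℝ))
          simpa [Finset.sum_const, nsmul_eq_mul] using this
        rw [hcard]
        have hT' : (0:ℝ) < T := by exact_mod_cast hT
        rw [mul_one_div, div_le_div_iff₀ (by positivity) (by norm_num)]
        nlinarith [hT']
end

section
/- Let μ > 0 and suppose that random variables X₁, X₂, …, X_m satisfy, for every t ∈ [m]: (1) X_t ∈ [−1, 1] almost surely; (2) E[X_t | X₁, …, X_{t−1}] ≥ μ. Then for every a > 0, Pr[Σ_{t=1}^m X_t ≤ −a] ≤ exp(−2μa). -/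
open MeasureTheory

lemma aux_sinh_le_mul_cosh {x : ℝ} (hx : 0 ≤ x) : Real.sinh x ≤ x * Real.cosh x := by
  have hderiv : ∀ y : ℝ, HasDerivAt (fun y : ℝ => y * Real.cosh y - Real.sinh y)
      (y * Real.sinh y) y := by
    intro y
    have h1 : HasDerivAt (fun y : ℝ => y * Real.cosh y)
        (1 * Real.cosh y + y * Real.sinh y) y :=
      (hasDerivAt_id y).mul (Real.hasDerivAt_cosh y)
    have h2 := h1.sub (Real.hasDerivAt_sinh y)
    refine h2.congr_deriv ?_
    ring
  have hmono : MonotoneOn (fun y : ℝ => y * Real.cosh y - Real.sinh y) (Set.Ici 0) := by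
    apply monotoneOn_of_deriv_nonneg (convex_Ici 0)
    · exact Continuous.continuousOn (by continuity)
    · intro y _
      exact (hderiv y).differentiableAt.differentiableWithinAt
    · intro y hy
      rw [interior_Ici, Set.mem_Ioi] at hy
      rw [(hderiv y).deriv]
      exact mul_nonneg hy.le (Real.sinh_nonneg_iff.mpr hy.le)
  have h0 := hmono (Set.self_mem_Ici) (Set.mem_Ici.2 hx) hx
  simp only [Real.cosh_zero, Real.sinh_zero, mul_one, zero_mul, sub_zero, zero_sub,
    neg_zero] at h0
  linarith

lemma aux_cosh_bound {t : ℝ} (ht : 0 ≤ t) : Real.cosh (2 * t) ≤ 1 + t * Real.sinh (2 * t) := by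
  have h1 := aux_sinh_le_mul_cosh ht
  have h2 : 0 ≤ Real.sinh t := Real.sinh_nonneg_iff.mpr ht
  have h3 := Real.cosh_sq t
  rw [Real.cosh_two_mul, Real.sinh_two_mul]
  nlinarith [mul_le_mul_of_nonneg_left h1 h2]

lemma aux_exp_convex_bound {l x : ℝ} (hx1 : -1 ≤ x) (hx2 : x ≤ 1) :
    Real.exp (-(l * x)) ≤ Real.cosh l - x * Real.sinh l := by
  have hc := convexOn_exp.2 (Set.mem_univ l) (Set.mem_univ (-l))
      (show (0:ℝ) ≤ (1 - x) / 2 by linarith) (show (0:ℝ) ≤ (1 + x) / 2 by linarith)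
      (show (1 - x) / 2 + (1 + x) / 2 = 1 by ring)
  simp only [smul_eq_mul] at hc
  have heq : (1 - x) / 2 * l + (1 + x) / 2 * (-l) = -(l * x) := by ring
  rw [heq] at hc
  calc Real.exp (-(l * x)) ≤ (1 - x) / 2 * Real.exp l + (1 + x) / 2 * Real.exp (-l) := hc
    _ = Real.cosh l - x * Real.sinh l := by rw [Real.cosh_eq, Real.sinh_eq]; ring

/-- Conditional-expectation bound: if `Y ∈ [-1,1]` a.s. and `μ₀ ≤ E[Y | F]` a.s., then
`E[exp (-(2 μ₀ Y)) | F] ≤ 1` a.s. -/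
lemma aux_cond_bound {Ω : Type*} [m0 : MeasurableSpace Ω] (μ : Measure Ω)
    [IsProbabilityMeasure μ] {F : MeasurableSpace Ω} (hF : F ≤ m0) {Y : Ω → ℝ}
    (hY_int : Integrable Y μ) (hYb : ∀ᵐ ω ∂μ, Y ω ∈ Set.Icc (-1 : ℝ) 1)
    {μ₀ : ℝ} (hμ₀ : 0 < μ₀) (hc : ∀ᵐ ω ∂μ, μ₀ ≤ (μ[Y|F]) ω) :
    μ[fun ω => Real.exp (-(2 * μ₀ * Y ω))|F] ≤ᵐ[μ] fun _ => (1 : ℝ) := by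
  have hsinh : 0 ≤ Real.sinh (2 * μ₀) := Real.sinh_nonneg_iff.mpr (by positivity)
  have hB : Real.cosh (2 * μ₀) ≤ 1 + μ₀ * Real.sinh (2 * μ₀) := aux_cosh_bound hμ₀.le
  set g : Ω → ℝ := fun ω => Real.exp (-(2 * μ₀ * Y ω)) with hg_def
  have hg_asm : AEStronglyMeasurable[m0] g μ :=
    Real.continuous_exp.comp_aestronglyMeasurable
      ((hY_int.aestronglyMeasurable.const_mul (2 * μ₀)).neg)
  have hg_int : Integrable g μ := by
    refine Integrable.mono' (integrable_const (Real.exp (2 * μ₀))) hg_asm ?_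
    filter_upwards [hYb] with ω hω
    rw [Real.norm_eq_abs, Real.abs_exp, Real.exp_le_exp]
    nlinarith [hω.1]
  set φ : Ω → ℝ := (fun _ => Real.cosh (2 * μ₀)) - Real.sinh (2 * μ₀) • Y with hφ_def
  have hφ_int : Integrable φ μ := (integrable_const _).sub (hY_int.smul _)
  have hgφ : g ≤ᵐ[μ] φ := by
    filter_upwards [hYb] with ω hω
    have := aux_exp_convex_bound (l := 2 * μ₀) hω.1 hω.2
    simp only [hg_def, hφ_def, Pi.sub_apply, Pi.smul_apply, smul_eq_mul]
    linarith
  have hcondφ : μ[φ|F] =ᵐ[μ]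
      fun ω => Real.cosh (2 * μ₀) - Real.sinh (2 * μ₀) * (μ[Y|F]) ω := by
    have h1 := condExp_sub (μ := μ) (m := F) (integrable_const (Real.cosh (2 * μ₀)))
      (hY_int.smul (Real.sinh (2 * μ₀)))
    have h2 := condExp_smul (μ := μ) (m := F) (Real.sinh (2 * μ₀)) Y
    have h3 := condExp_const (μ := μ) hF (Real.cosh (2 * μ₀))
    calc μ[φ|F] =ᵐ[μ] μ[fun _ => Real.cosh (2 * μ₀)|F] - μ[Real.sinh (2 * μ₀) • Y|F] := h1
      _ =ᵐ[μ] fun ω => Real.cosh (2 * μ₀) - Real.sinh (2 * μ₀) * (μ[Y|F]) ω := by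
          filter_upwards [h2] with ω hω2
          simp only [Pi.sub_apply, hω2, Pi.smul_apply, smul_eq_mul, h3]
  have hmono := condExp_mono (m := F) hg_int hφ_int hgφ
  filter_upwards [hmono, hcondφ, hc] with ω h1 h2 h3
  rw [h2] at h1
  calc (μ[g|F]) ω ≤ Real.cosh (2 * μ₀) - Real.sinh (2 * μ₀) * (μ[Y|F]) ω := h1
    _ ≤ Real.cosh (2 * μ₀) - Real.sinh (2 * μ₀) * μ₀ := by nlinarith
    _ ≤ 1 := by nlinarith

/-- One step of the exponential supermartingale argument. -/
lemma aux_step {Ω : Type*} [m0 : MeasurableSpace Ω] (μ : Measure Ω) [IsProbabilityMeasure μ]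
    {F : MeasurableSpace Ω} (hF : F ≤ m0) {f g : Ω → ℝ}
    (hf_sm : StronglyMeasurable[F] f) (hf_nonneg : ∀ ω, 0 ≤ f ω)
    (hf_int : Integrable f μ) (hg_int : Integrable g μ) (hfg_int : Integrable (f * g) μ)
    (hg_nonneg : 0 ≤ᵐ[μ] g) (hg_cond : μ[g|F] ≤ᵐ[μ] fun _ => (1 : ℝ)) :
    ∫ ω, (f * g) ω ∂μ ≤ ∫ ω, f ω ∂μ := by
  calc ∫ ω, (f * g) ω ∂μ = ∫ ω, (μ[f * g|F]) ω ∂μ := (integral_condExp hF).symm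
    _ = ∫ ω, (f * μ[g|F]) ω ∂μ :=
        integral_congr_ae (condExp_mul_of_stronglyMeasurable_left hf_sm hfg_int hg_int)
    _ ≤ ∫ ω, f ω ∂μ := by
        refine integral_mono_of_nonneg ?_ hf_int ?_
        · have hgc0 : 0 ≤ᵐ[μ] μ[g|F] := condExp_nonneg hg_nonneg
          filter_upwards [hgc0] with ω h0
          simp only [Pi.mul_apply]
          exact mul_nonneg (hf_nonneg ω) h0
        · filter_upwards [hg_cond] with ω h1
          simp only [Pi.mul_apply]
          calc f ω * (μ[g|F]) ω ≤ f ω * 1 := mul_le_mul_of_nonneg_left h1 (hf_nonneg ω)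
            _ = f ω := mul_one _

/-- Let `μ₀ > 0` and suppose random variables `X₁, …, X_m` satisfy, for every
`t ∈ [m]`: (1) `X_t ∈ [−1, 1]` almost surely; (2) `E[X_t | X₁, …, X_{t−1}] ≥ μ₀`. Then for
every `a > 0`, `Pr[Σ_{t=1}^m X_t ≤ −a] ≤ exp(−2·μ₀·a)`. -/
theorem azuma_submartingale_exponential_bound
    {Ω : Type*} [MeasurableSpace Ω] (μ : Measure Ω) [IsProbabilityMeasure μ]
    (m : ℕ) (X : ℕ → Ω → ℝ) (μ₀ : ℝ) (hμ₀ : 0 < μ₀)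
    (hmeas : ∀ t ∈ Finset.Icc 1 m, Measurable (X t))
    (hbdd : ∀ t ∈ Finset.Icc 1 m, ∀ᵐ ω ∂μ, X t ω ∈ Set.Icc (-1 : ℝ) 1)
    (hcond : ∀ t ∈ Finset.Icc 1 m, ∀ᵐ ω ∂μ,
      μ₀ ≤ (μ[X t | ⨆ s ∈ Finset.Ico 1 t, MeasurableSpace.comap (X s) inferInstance]) ω)
    (a : ℝ) (ha : 0 < a) :
    (μ {ω | ∑ t ∈ Finset.Icc 1 m, X t ω ≤ -a}).toReal ≤ Real.exp (-(2 * μ₀ * a)) := by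
  classical
  have hl : (0:ℝ) < 2 * μ₀ := by positivity
  have hS_meas : ∀ k, k ≤ m → Measurable (fun ω => ∑ t ∈ Finset.Icc 1 k, X t ω) := by
    intro k hk
    apply Finset.measurable_sum
    intro t ht
    refine hmeas t ?_
    rw [Finset.mem_Icc] at ht ⊢
    omega
  have hbdd_all : ∀ᵐ ω ∂μ, ∀ t ∈ Finset.Icc 1 m, X t ω ∈ Set.Icc (-1 : ℝ) 1 :=
    (Finset.eventually_all _).mpr hbdd
  have hf_int : ∀ k, k ≤ m →
      Integrable (fun ω => Real.exp (-(2 * μ₀ * ∑ t ∈ Finset.Icc 1 k, X t ω))) μ := by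
    intro k hk
    have hmeas' : Measurable fun ω => Real.exp (-(2 * μ₀ * ∑ t ∈ Finset.Icc 1 k, X t ω)) :=
      Real.measurable_exp.comp ((hS_meas k hk).const_mul (2 * μ₀)).neg
    refine Integrable.mono' (integrable_const (Real.exp (2 * μ₀ * k)))
      hmeas'.aestronglyMeasurable ?_
    filter_upwards [hbdd_all] with ω hω
    rw [Real.norm_eq_abs, Real.abs_exp, Real.exp_le_exp]
    have hsum : -(k : ℝ) ≤ ∑ t ∈ Finset.Icc 1 k, X t ω := by
      have h1 : ∑ t ∈ Finset.Icc 1 k, (-1 : ℝ) ≤ ∑ t ∈ Finset.Icc 1 k, X t ω := by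
        refine Finset.sum_le_sum fun t ht => ?_
        exact (hω t (by rw [Finset.mem_Icc] at ht ⊢; omega)).1
      have h2 : (Finset.Icc 1 k).card = k := by rw [Nat.card_Icc]; omega
      rw [Finset.sum_const, h2] at h1
      simpa using h1
    nlinarith
  have key : ∀ k, k ≤ m →
      ∫ ω, Real.exp (-(2 * μ₀ * ∑ t ∈ Finset.Icc 1 k, X t ω)) ∂μ ≤ 1 := by
    intro k
    induction k with
    | zero =>
      intro _
      rw [Finset.Icc_eq_empty (by omega)]
      simp
    | succ k ih =>
      intro hk1
      have hk : k ≤ m := by omega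
      have hmem : k + 1 ∈ Finset.Icc 1 m := by rw [Finset.mem_Icc]; omega
      have hF_le : (⨆ s ∈ Finset.Ico 1 (k + 1), MeasurableSpace.comap (X s) inferInstance)
          ≤ ‹MeasurableSpace Ω› := by
        refine iSup_le fun s => iSup_le fun hs => ?_
        refine Measurable.comap_le (hmeas s ?_)
        rw [Finset.mem_Ico] at hs
        rw [Finset.mem_Icc]
        omega
      have hX_int : Integrable (X (k + 1)) μ := by
        refine Integrable.mono' (integrable_const 1)
          (hmeas (k + 1) hmem).aestronglyMeasurable ?_
        filter_upwards [hbdd (k + 1) hmem] with ω hω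
        rw [Real.norm_eq_abs, abs_le]
        exact ⟨hω.1, hω.2⟩
      have hg_cond := aux_cond_bound μ hF_le hX_int (hbdd (k + 1) hmem) hμ₀
        (hcond (k + 1) hmem)
      have hg_int : Integrable (fun ω => Real.exp (-(2 * μ₀ * X (k + 1) ω))) μ := by
        refine Integrable.mono' (integrable_const (Real.exp (2 * μ₀)))
          (Real.measurable_exp.comp
            ((hmeas (k + 1) hmem).const_mul (2 * μ₀)).neg).aestronglyMeasurable ?_
        filter_upwards [hbdd (k + 1) hmem] with ω hω
        rw [Real.norm_eq_abs, Real.abs_exp, Real.exp_le_exp]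
        nlinarith [hω.1]
      have hsplit : (fun ω => Real.exp (-(2 * μ₀ * ∑ t ∈ Finset.Icc 1 (k + 1), X t ω)))
          = (fun ω => Real.exp (-(2 * μ₀ * ∑ t ∈ Finset.Icc 1 k, X t ω)))
            * (fun ω => Real.exp (-(2 * μ₀ * X (k + 1) ω))) := by
        funext ω
        rw [Finset.sum_Icc_succ_top (by omega : 1 ≤ k + 1)]
        simp only [Pi.mul_apply, ← Real.exp_add]
        congr 1
        ring
      have hfg_int : Integrable ((fun ω => Real.exp (-(2 * μ₀ * ∑ t ∈ Finset.Icc 1 k, X t ω)))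
          * (fun ω => Real.exp (-(2 * μ₀ * X (k + 1) ω)))) μ := by
        rw [← hsplit]
        exact hf_int (k + 1) hk1
      have hf_smG : StronglyMeasurable[⨆ s ∈ Finset.Ico 1 (k + 1),
          MeasurableSpace.comap (X s) inferInstance]
          (fun ω => Real.exp (-(2 * μ₀ * ∑ t ∈ Finset.Icc 1 k, X t ω))) := by
        apply Measurable.stronglyMeasurable
        have hsum_meas : Measurable[⨆ s ∈ Finset.Ico 1 (k + 1),
            MeasurableSpace.comap (X s) inferInstance]
            (fun ω => ∑ t ∈ Finset.Icc 1 k, X t ω) := by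
          apply Finset.measurable_sum
          intro s hs
          refine Measurable.of_comap_le ?_
          refine le_iSup₂ (f := fun s (_ : s ∈ Finset.Ico 1 (k + 1)) =>
            MeasurableSpace.comap (X s) inferInstance) s ?_
          rw [Finset.mem_Icc] at hs
          rw [Finset.mem_Ico]
          omega
        exact Real.measurable_exp.comp (hsum_meas.const_mul (2 * μ₀)).neg
      have hstep := aux_step μ hF_le hf_smG (fun ω => (Real.exp_pos _).le)
        (hf_int k hk) hg_int hfg_int
        (Filter.Eventually.of_forall fun ω => (Real.exp_pos _).le) hg_cond
      calc ∫ ω, Real.exp (-(2 * μ₀ * ∑ t ∈ Finset.Icc 1 (k + 1), X t ω)) ∂μ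
          = ∫ ω, ((fun ω => Real.exp (-(2 * μ₀ * ∑ t ∈ Finset.Icc 1 k, X t ω)))
            * (fun ω => Real.exp (-(2 * μ₀ * X (k + 1) ω)))) ω ∂μ := by rw [hsplit]
        _ ≤ ∫ ω, Real.exp (-(2 * μ₀ * ∑ t ∈ Finset.Icc 1 k, X t ω)) ∂μ := hstep
        _ ≤ 1 := ih hk
  have hmain := key m le_rfl
  have hsub : {ω | ∑ t ∈ Finset.Icc 1 m, X t ω ≤ -a} ⊆
      {ω | Real.exp (2 * μ₀ * a) ≤ Real.exp (-(2 * μ₀ * ∑ t ∈ Finset.Icc 1 m, X t ω))} := by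
    intro ω hω
    simp only [Set.mem_setOf_eq] at hω ⊢
    rw [Real.exp_le_exp]
    nlinarith
  have hmarkov := mul_meas_ge_le_integral_of_nonneg (μ := μ)
      (f := fun ω => Real.exp (-(2 * μ₀ * ∑ t ∈ Finset.Icc 1 m, X t ω)))
      (Filter.Eventually.of_forall fun ω => (Real.exp_pos _).le) (hf_int m le_rfl)
      (Real.exp (2 * μ₀ * a))
  have h3 : Real.exp (2 * μ₀ * a) * (μ {ω | Real.exp (2 * μ₀ * a) ≤
      Real.exp (-(2 * μ₀ * ∑ t ∈ Finset.Icc 1 m, X t ω))}).toReal ≤ 1 :=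
    le_trans hmarkov hmain
  have h2 : (μ {ω | ∑ t ∈ Finset.Icc 1 m, X t ω ≤ -a}).toReal ≤
      (μ {ω | Real.exp (2 * μ₀ * a) ≤
        Real.exp (-(2 * μ₀ * ∑ t ∈ Finset.Icc 1 m, X t ω))}).toReal :=
    ENNReal.toReal_mono (measure_ne_top μ _) (measure_mono hsub)
  have h4 : (μ {ω | Real.exp (2 * μ₀ * a) ≤
      Real.exp (-(2 * μ₀ * ∑ t ∈ Finset.Icc 1 m, X t ω))}).toReal
      ≤ 1 / Real.exp (2 * μ₀ * a) := (le_div_iff₀' (Real.exp_pos _)).mpr h3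
  calc (μ {ω | ∑ t ∈ Finset.Icc 1 m, X t ω ≤ -a}).toReal
      ≤ 1 / Real.exp (2 * μ₀ * a) := le_trans h2 h4
    _ = Real.exp (-(2 * μ₀ * a)) := by rw [Real.exp_neg, one_div]
end
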